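/- arXiv:1810.10032 — 6 statements merged into one kernel-verified Lean document; each statement's English description precedes it below -/
import Mathlib

section
/- Let d ≥ 2 be a natural number and let K ⊂ ℝ^d be a compact set with nonempty interior. Then for every n ∈ ℕ₀ the inclusion { f|_K : f ∈ R_n^d, f|_K continuous } ⊊ { f|_K : f ∈ R_{n+1}^d, f|_K continuous } is strict; that is, there exists a sum of n+1 ridge functions that is continuous on K but whose restriction to K does not agree with the restriction of any sum of n ridge functions that is continuous on K. -/
open MeasureTheory

/-- A univariate function is locally square-integrable (`L²_loc(ℝ)`). -/
def L2loc (g : ℝ → ℝ) : Prop :=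
  ∀ C : Set ℝ, IsCompact C → MemLp g 2 (volume.restrict C)

/-- `Ridge d n` is the set `R_n^d` of sums of `n` ridge functions on `ℝ^d`, with directions on the
Euclidean unit sphere and locally square-integrable profiles (`R_0^d = {0}` by the empty sum). -/
def Ridge (d n : ℕ) : Set ((Fin d → ℝ) → ℝ) :=
  { f | ∃ (a : Fin n → Fin d → ℝ) (g : Fin n → ℝ → ℝ),
      (∀ i, ∑ j, (a i j) ^ 2 = 1) ∧ (∀ i, L2loc (g i)) ∧
      f = fun x => ∑ i, g i (∑ j, a i j * x j) }



section RidgeAuxSec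
open Polynomial
namespace RidgeAux
variable {d : ℕ}

/-- inner product on `Fin d → ℝ` -/
def ip (u x : Fin d → ℝ) : ℝ := ∑ j, u j * x j

lemma ip_add_right (u x y : Fin d → ℝ) : ip u (x + y) = ip u x + ip u y := by
  simp [ip, mul_add, Finset.sum_add_distrib]

lemma ip_smul_right (u : Fin d → ℝ) (c : ℝ) (x : Fin d → ℝ) : ip u (c • x) = c * ip u x := by
  simp only [ip, Pi.smul_apply, smul_eq_mul, Finset.mul_sum]
  exact Finset.sum_congr rfl fun _ _ => by ring

lemma ip_add_left (u v x : Fin d → ℝ) : ip (u + v) x = ip u x + ip v x := by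
  simp [ip, add_mul, Finset.sum_add_distrib]

lemma ip_smul_left (c : ℝ) (u x : Fin d → ℝ) : ip (c • u) x = c * ip u x := by
  simp only [ip, Pi.smul_apply, smul_eq_mul, Finset.mul_sum]
  exact Finset.sum_congr rfl fun _ _ => by ring

lemma ip_sub_right (u x y : Fin d → ℝ) : ip u (x - y) = ip u x - ip u y := by
  simp [ip, mul_sub, Finset.sum_sub_distrib]

lemma ip_sub_left (u v x : Fin d → ℝ) : ip (u - v) x = ip u x - ip v x := by
  simp [ip, sub_mul, Finset.sum_sub_distrib]

lemma ip_comm (u x : Fin d → ℝ) : ip u x = ip x u := by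
  simp [ip, mul_comm]

lemma ip_self_eq_zero {u : Fin d → ℝ} (h : ip u u = 0) : u = 0 := by
  have : ∀ j ∈ Finset.univ, u j * u j = 0 := by
    intro j _
    have hnn : ∀ j ∈ (Finset.univ : Finset (Fin d)), 0 ≤ u j * u j := fun j _ => mul_self_nonneg _
    exact (Finset.sum_eq_zero_iff_of_nonneg hnn).mp h j (Finset.mem_univ j)
  funext j
  have := this j (Finset.mem_univ j)
  have := mul_self_eq_zero.mp this
  simpa using this

lemma ip_single_right (u : Fin d → ℝ) (k : Fin d) : ip u (Pi.single k 1) = u k := by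
  classical
  simp [ip, Pi.single_apply]

lemma exists_perp {u w : Fin d → ℝ} (hu : u ≠ 0) (hw : ip w w ≠ 0)
    (h : ∀ c : ℝ, u ≠ c • w) : ∃ b, ip u b = 0 ∧ ip w b ≠ 0 := by
  have huu : ip u u ≠ 0 := fun h0 => hu (ip_self_eq_zero h0)
  set c0 : ℝ := ip u w / ip u u with hc0
  refine ⟨w - c0 • u, ?_, ?_⟩
  · rw [ip_sub_right, ip_smul_right, hc0]
    field_simp
    ring
  · intro hwb
    set b := w - c0 • u with hb
    have hub : ip u b = 0 := by rw [hb, ip_sub_right, ip_smul_right, hc0]; field_simp; ring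
    have hbb : ip b b = 0 := by
      rw [hb, ip_sub_left, ip_smul_left]
      rw [← hb, hwb, hub]; ring
    have : b = 0 := ip_self_eq_zero hbb
    have hwu : w = c0 • u := sub_eq_zero.mp (hb ▸ this)
    have hc : c0 ≠ 0 := by
      intro h0
      rw [h0, zero_smul] at hwu
      exact hw (by rw [hwu]; simp [ip])
    exact h c0⁻¹ (by rw [hwu, smul_smul, inv_mul_cancel₀ hc, one_smul])


def sd (b : Fin d → ℝ) (f : (Fin d → ℝ) → ℝ) : (Fin d → ℝ) → ℝ := fun x => f (x + b) - f x

def mdiff : List (Fin d → ℝ) → ((Fin d → ℝ) → ℝ) → ((Fin d → ℝ) → ℝ)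
  | [], f => f
  | b :: l, f => mdiff l (sd b f)

lemma sd_comm (b c : Fin d → ℝ) (f : (Fin d → ℝ) → ℝ) : sd b (sd c f) = sd c (sd b f) := by
  funext x; simp [sd, add_right_comm]; ring

lemma sd_zero_fun (b : Fin d → ℝ) : sd b (fun _ : Fin d → ℝ => (0:ℝ)) = fun _ => 0 := by
  funext x; simp [sd]

lemma mdiff_zero_fun (l : List (Fin d → ℝ)) : mdiff l (fun _ => (0:ℝ)) = fun _ => 0 := by
  induction l with
  | nil => rfl
  | cons b l ih => rw [mdiff, sd_zero_fun, ih]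

lemma sd_of_invariant {b : Fin d → ℝ} {f : (Fin d → ℝ) → ℝ} (h : ∀ x, f (x + b) = f x) :
    sd b f = fun _ => 0 := by
  funext x; simp [sd, h x]

lemma mdiff_kill {l : List (Fin d → ℝ)} {b : Fin d → ℝ} {f : (Fin d → ℝ) → ℝ}
    (hb : b ∈ l) (h : ∀ x, f (x + b) = f x) : mdiff l f = fun _ => 0 := by
  induction l generalizing f with
  | nil => simp at hb
  | cons c l ih =>
    rcases List.mem_cons.mp hb with rfl | hb'
    · rw [mdiff, sd_of_invariant h, mdiff_zero_fun]
    · rw [mdiff]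
      refine ih hb' (fun x => ?_)
      simp only [sd]
      rw [add_right_comm x b c, h (x + c), h x]

lemma mdiff_sum {ι : Type*} (s : Finset ι) (F : ι → (Fin d → ℝ) → ℝ) (l : List (Fin d → ℝ)) :
    mdiff l (fun x => ∑ i ∈ s, F i x) = fun x => ∑ i ∈ s, mdiff l (F i) x := by
  induction l generalizing F with
  | nil => rfl
  | cons b l ih =>
    rw [mdiff]
    have : sd b (fun x => ∑ i ∈ s, F i x) = fun x => ∑ i ∈ s, sd b (F i) x := by
      funext x; simp [sd, Finset.sum_sub_distrib]
    rw [this, ih]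
    rfl

lemma mdiff_local_eq {l : List (Fin d → ℝ)} {f g : (Fin d → ℝ) → ℝ} {B : Set (Fin d → ℝ)}
    {x : Fin d → ℝ} (hfg : ∀ y ∈ B, f y = g y)
    (hx : ∀ t : List (Fin d → ℝ), t.Sublist l → x + t.sum ∈ B) :
    mdiff l f x = mdiff l g x := by
  induction l generalizing f g B with
  | nil =>
    have := hx [] (List.nil_sublist _)
    simpa [mdiff] using hfg x (by simpa using this)
  | cons b l ih =>
    rw [mdiff, mdiff]
    refine ih (f := sd b f) (g := sd b g) (B := {y | y ∈ B ∧ y + b ∈ B}) ?_ ?_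
    · rintro y ⟨hy1, hy2⟩
      simp [sd, hfg _ hy1, hfg _ hy2]
    · intro t ht
      constructor
      · exact hx t (ht.cons b)
      · have := hx (b :: t) (ht.cons₂ b)
        simpa [add_assoc, add_comm, add_left_comm] using this

noncomputable def pstep (s : ℝ) (P : ℝ[X]) : ℝ[X] := P.comp (X + C s) - P

noncomputable def pdiff : List ℝ → ℝ[X] → ℝ[X]
  | [], P => P
  | s :: l, P => pdiff l (pstep s P)

lemma mdiff_ridge (l : List (Fin d → ℝ)) (v : Fin d → ℝ) (P : ℝ[X]) :
    mdiff l (fun x => P.eval (ip v x)) =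
      fun x => (pdiff (l.map (fun b => ip v b)) P).eval (ip v x) := by
  induction l generalizing P with
  | nil => rfl
  | cons b l ih =>
    rw [mdiff, List.map_cons, pdiff]
    have : sd b (fun x => P.eval (ip v x)) = fun x => (pstep (ip v b) P).eval (ip v x) := by
      funext x
      simp [sd, pstep, ip_add_right, eval_comp]
    rw [this, ih]

lemma hasseDeriv_high (P : ℝ[X]) (m : ℕ) (hP : P.degree ≤ (m : ℕ)) :
    hasseDeriv m P = C (P.coeff m) := by
  ext k
  rw [hasseDeriv_coeff]
  rcases Nat.eq_zero_or_pos k with rfl | hk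
  · simp
  · rw [coeff_C, if_neg (by omega)]
    have : P.coeff (k + m) = 0 := coeff_eq_zero_of_degree_lt (lt_of_le_of_lt hP (by
      exact_mod_cast Nat.lt_add_of_pos_left hk))
    simp [this]

lemma pstep_degree_le (s : ℝ) (P : ℝ[X]) (N : ℕ) (hP : P.degree ≤ (N + 1 : ℕ)) :
    (pstep s P).degree ≤ (N : ℕ) := by
  rw [degree_le_iff_coeff_zero]
  intro m hm
  have hm' : N + 1 ≤ m := by exact_mod_cast (by exact_mod_cast hm : (N:ℕ) < m)
  have hc : (P.comp (X + C s)).coeff m = P.coeff m := by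
    rw [← taylor_apply, taylor_coeff, hasseDeriv_high P m (le_trans hP (by exact_mod_cast hm'))]
    simp
  simp [pstep, coeff_sub, hc]

lemma hasseDeriv_top (P : ℝ[X]) (N : ℕ) (hP : P.degree ≤ (N + 1 : ℕ)) :
    hasseDeriv N P = C (P.coeff N) + C ((N + 1 : ℕ) * P.coeff (N + 1)) * X := by
  ext k
  rw [hasseDeriv_coeff]
  match k with
  | 0 => simp
  | 1 =>
    rw [Nat.add_comm 1 N, Nat.choose_succ_self_right]
    simp [coeff_X, coeff_C]
  | (k+2) =>
    have : P.coeff (k + 2 + N) = 0 := coeff_eq_zero_of_degree_lt (lt_of_le_of_lt hP (by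
      exact_mod_cast by omega))
    simp [this, coeff_C, coeff_X, coeff_one]

lemma pstep_coeff_top (s : ℝ) (P : ℝ[X]) (N : ℕ) (hP : P.degree ≤ (N + 1 : ℕ)) :
    (pstep s P).coeff N = (N + 1 : ℕ) * s * P.coeff (N + 1) := by
  rw [pstep, coeff_sub, ← taylor_apply, taylor_coeff, hasseDeriv_top P N hP]
  simp
  ring

lemma pdiff_degree_le (l : List ℝ) (P : ℝ[X]) (N : ℕ) (hP : P.degree ≤ (N : ℕ))
    (hl : l.length ≤ N) : (pdiff l P).degree ≤ ((N - l.length : ℕ) : WithBot ℕ) := by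
  induction l generalizing P N with
  | nil => simpa [pdiff] using hP
  | cons s l ih =>
    obtain ⟨N', rfl⟩ : ∃ N', N = N' + 1 := ⟨N - 1, by simp at hl; omega⟩
    rw [pdiff]
    have h1 : (pstep s P).degree ≤ (N' : ℕ) := pstep_degree_le s P N' hP
    have h2 := ih (pstep s P) N' h1 (by simp at hl ⊢; omega)
    simpa [Nat.succ_sub_succ] using h2

lemma pdiff_coeff_top (l : List ℝ) (P : ℝ[X]) (N : ℕ) (hP : P.degree ≤ (N : ℕ))
    (hl : l.length ≤ N) :
    (pdiff l P).coeff (N - l.length) = (N.descFactorial l.length : ℝ) * l.prod * P.coeff N := by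
  induction l generalizing P N with
  | nil => simp [pdiff]
  | cons s l ih =>
    obtain ⟨N', rfl⟩ : ∃ N', N = N' + 1 := ⟨N - 1, by simp at hl; omega⟩
    rw [pdiff]
    have h1 : (pstep s P).degree ≤ (N' : ℕ) := pstep_degree_le s P N' hP
    have h2 := ih (pstep s P) N' h1 (by simp at hl ⊢; omega)
    rw [pstep_coeff_top s P N' hP] at h2
    have hlen : N' + 1 - (s :: l).length = N' - l.length := by simp
    rw [hlen, h2, List.length_cons, Nat.succ_descFactorial_succ, List.prod_cons]
    push_cast
    ring

end RidgeAux

namespace RidgeAux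

lemma ip_single_left (k : Fin d) (x : Fin d → ℝ) : ip (Pi.single k 1) x = x k := by
  rw [ip_comm, ip_single_right]

lemma list_norm_sum_le (t : List (Fin d → ℝ)) (c : ℝ) (h : ∀ z ∈ t, ‖z‖ ≤ c) :
    ‖t.sum‖ ≤ t.length * c := by
  induction t with
  | nil => simp
  | cons z t ih =>
    simp only [List.sum_cons, List.length_cons]
    calc ‖z + t.sum‖ ≤ ‖z‖ + ‖t.sum‖ := norm_add_le _ _
      _ ≤ c + t.length * c :=
        add_le_add (h z (by simp)) (ih fun z hz => h z (by simp [hz]))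
      _ = (↑(t.length + 1) : ℝ) * c := by push_cast; ring

lemma L2loc_of_continuous {g : ℝ → ℝ} (hgc : Continuous g) : L2loc g := by
  intro C hC
  haveI : Fact (MeasureTheory.volume C < ⊤) := ⟨hC.measure_lt_top⟩
  rcases C.eq_empty_or_nonempty with rfl | hne
  · exact ⟨hgc.aestronglyMeasurable, by simp [Measure.restrict_empty, eLpNorm_measure_zero]⟩
  · obtain ⟨z, hz, hmax⟩ := hC.exists_isMaxOn hne (continuous_norm.comp hgc).continuousOn
    refine MemLp.of_bound hgc.aestronglyMeasurable ‖g z‖ ?_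
    rw [ae_restrict_iff' hC.measurableSet]
    exact ae_of_all _ fun y hy => hmax hy

end RidgeAux

open RidgeAux in
lemma ridge_mono {d n : ℕ} (hd : 0 < d) {f : (Fin d → ℝ) → ℝ} (hf : f ∈ Ridge d n) :
    f ∈ Ridge d (n + 1) := by
  obtain ⟨a, g, ha, hg, rfl⟩ := hf
  classical
  refine ⟨Fin.snoc a (Pi.single ⟨0, hd⟩ (1:ℝ)), Fin.snoc g (fun _ => 0), ?_, ?_, ?_⟩
  · intro i
    refine Fin.lastCases ?_ (fun i => ?_) i
    · rw [Fin.snoc_last]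
      simp [Pi.single_apply]
    · rw [Fin.snoc_castSucc]; exact ha i
  · intro i
    refine Fin.lastCases ?_ (fun i => ?_) i
    · rw [Fin.snoc_last]; exact fun C hC => MemLp.zero'
    · rw [Fin.snoc_castSucc]; exact hg i
  · funext x
    rw [Fin.sum_univ_castSucc]
    simp [Fin.snoc_castSucc, Fin.snoc_last]

end RidgeAuxSec

set_option maxHeartbeats 400000 in
/-- For `d ≥ 2` and a compact set `K ⊂ ℝ^d` with nonempty interior, the set of
restrictions to `K` of sums of `n` ridge functions that are continuous on `K` is strictly
contained in the corresponding set for `n + 1` ridge functions. -/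
theorem ridge_restrict_continuous_ssubset (d : ℕ) (hd : 2 ≤ d) (K : Set (Fin d → ℝ))
    (hK : IsCompact K) (hKint : (interior K).Nonempty) (n : ℕ) :
    { h : K → ℝ | ∃ f ∈ Ridge d n, ContinuousOn f K ∧ h = K.restrict f }
      ⊂ { h : K → ℝ | ∃ f ∈ Ridge d (n + 1), ContinuousOn f K ∧ h = K.restrict f } := by
  open RidgeAux in
  classical
  have h0d : 0 < d := by omega
  have h1d : 1 < d := by omega
  set j0 : Fin d := ⟨0, h0d⟩ with hj0def
  set j1 : Fin d := ⟨1, h1d⟩ with hj1def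
  have hj01 : j0 ≠ j1 := by simp [hj0def, hj1def, Fin.ext_iff]
  set N : ℕ := 2 * n + 1 with hNdef
  set e0 : Fin d → ℝ := Pi.single j0 1 with he0def
  set e1 : Fin d → ℝ := Pi.single j1 1 with he1def
  have he00 : e0 j0 = 1 := by simp [he0def]
  have he01 : e0 j1 = 0 := by rw [he0def]; exact Pi.single_eq_of_ne (Ne.symm hj01) 1
  have he10 : e1 j0 = 0 := by rw [he1def]; exact Pi.single_eq_of_ne hj01 1
  have he11 : e1 j1 = 1 := by simp [he1def]
  set cc : Fin (n+1) → ℝ := fun i => (Real.sqrt (1 + ((i:ℕ):ℝ)^2))⁻¹ with hccdef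
  have hccpos : ∀ i, 0 < cc i := by
    intro i
    have : (0:ℝ) < 1 + ((i:ℕ):ℝ)^2 := by positivity
    simp only [hccdef]
    exact inv_pos.mpr (Real.sqrt_pos.mpr this)
  set v : Fin (n+1) → Fin d → ℝ := fun i => cc i • (e0 + ((i:ℕ):ℝ) • e1) with hvdef
  have hv0 : ∀ i, v i j0 = cc i := by
    intro i; simp [hvdef, he00, he10]
  have hv1 : ∀ i, v i j1 = cc i * ((i:ℕ):ℝ) := by
    intro i; simp [hvdef, he01, he11]
  have hipv : ∀ (i : Fin (n+1)) (x : Fin d → ℝ),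
      ip (v i) x = cc i * (x j0 + ((i:ℕ):ℝ) * x j1) := by
    intro i x
    rw [hvdef]
    rw [ip_smul_left, ip_add_left, ip_smul_left, he0def, he1def,
      ip_single_left, ip_single_left]
  have hvv : ∀ i, ip (v i) (v i) = 1 := by
    intro i
    rw [hipv, hv0, hv1]
    have h1 : (0:ℝ) < 1 + ((i:ℕ):ℝ)^2 := by positivity
    have h2 : Real.sqrt (1 + ((i:ℕ):ℝ)^2) ^ 2 = 1 + ((i:ℕ):ℝ)^2 := Real.sq_sqrt h1.le
    have h3 : Real.sqrt (1 + ((i:ℕ):ℝ)^2) ≠ 0 := by positivity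
    simp only [hccdef]
    field_simp
    nlinarith [h2]
  have hvunit : ∀ i, ∑ j, (v i j)^2 = 1 := by
    intro i
    have : ∑ j, (v i j)^2 = ip (v i) (v i) := by
      simp [ip, sq]
    rw [this, hvv]
  -- the (n+1)-ridge-function witness
  set p : (Fin d → ℝ) → ℝ := fun x => ∑ i : Fin (n+1), (∑ j, v i j * x j) ^ N with hpdef
  have hpmem : p ∈ Ridge d (n+1) := by
    refine ⟨v, fun _ t => t ^ N, hvunit, fun _ => L2loc_of_continuous (by continuity), rfl⟩
  have hpcont : ContinuousOn p K := by
    apply Continuous.continuousOn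
    apply continuous_finset_sum
    intro i _
    exact (continuous_finset_sum _ fun j _ => (continuous_const.mul (continuous_apply j))).pow N
  have SUB : { h : K → ℝ | ∃ f ∈ Ridge d n, ContinuousOn f K ∧ h = K.restrict f }
      ⊆ { h : K → ℝ | ∃ f ∈ Ridge d (n + 1), ContinuousOn f K ∧ h = K.restrict f } := by
    rintro h ⟨f, hf, hc, rfl⟩
    exact ⟨f, ridge_mono h0d hf, hc, rfl⟩
  rw [Set.ssubset_iff_of_subset SUB]
  refine ⟨K.restrict p, ⟨p, hpmem, hpcont, rfl⟩, ?_⟩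
  rintro ⟨f, ⟨a, g, ha, hg, rfl⟩, hfc, heq⟩
  -- equality of `p` and the `n`-term sum on `K`
  have hpe : ∀ y ∈ K, p y = ∑ i, g i (ip (a i) y) := by
    intro y hy
    have := congrFun heq (⟨y, hy⟩ : K)
    exact this
  -- adversary directions are nonzero
  have ha' : ∀ jj : Fin n, a jj ≠ 0 := by
    intro jj hz
    have := ha jj
    rw [hz] at this
    simp at this
  -- an interior ball
  obtain ⟨x₀, hx₀⟩ := hKint
  obtain ⟨r, hr, hball⟩ := Metric.isOpen_iff.mp isOpen_interior x₀ hx₀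
  have hballK : Metric.ball x₀ r ⊆ K := hball.trans interior_subset
  -- pigeonhole: some direction `v i₀` is parallel to no `a jj`
  have pig : ∃ i₀ : Fin (n+1), ∀ (jj : Fin n) (c : ℝ), a jj ≠ c • v i₀ := by
    by_contra hcon
    push_neg at hcon
    choose J Cc hJ using hcon
    have hinj : Function.Injective J := by
      intro i i' hii
      have h1 : Cc i • v i = Cc i' • v i' := by rw [← hJ i, hii, hJ i']
      have hCc : ∀ i'', Cc i'' ≠ 0 := by
        intro i'' h0
        apply ha' (J i'')
        rw [hJ i'', h0, zero_smul]
      have hA : Cc i * cc i = Cc i' * cc i' := by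
        have := congrFun h1 j0
        simpa [hv0] using this
      have hB : Cc i * (cc i * ((i:ℕ):ℝ)) = Cc i' * (cc i' * ((i':ℕ):ℝ)) := by
        have := congrFun h1 j1
        simpa [hv1] using this
      have hAne : Cc i * cc i ≠ 0 := mul_ne_zero (hCc i) (hccpos i).ne'
      have : ((i:ℕ):ℝ) = ((i':ℕ):ℝ) := by
        have hB' : (Cc i * cc i) * ((i:ℕ):ℝ) = (Cc i' * cc i') * ((i':ℕ):ℝ) := by
          ring_nf; ring_nf at hB; linarith [hB]
        rw [← hA] at hB'
        exact mul_left_cancel₀ hAne hB'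
      have : (i:ℕ) = (i':ℕ) := Nat.cast_injective this
      exact Fin.val_injective this
    have := Fintype.card_le_of_injective J hinj
    simp at this
  obtain ⟨i₀, hi₀⟩ := pig
  -- difference vectors for the adversary terms
  have hvv0 : ip (v i₀) (v i₀) ≠ 0 := by rw [hvv]; norm_num
  have hβ : ∀ jj : Fin n, ∃ b, ip (a jj) b = 0 ∧ ip (v i₀) b ≠ 0 := by
    intro jj
    exact exists_perp (ha' jj) hvv0 (hi₀ jj)
  choose β hβ1 hβ2 using hβ
  -- difference vectors for our own terms
  set γ : Fin (n+1) → (Fin d → ℝ) :=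
    fun i => if i = i₀ then v i₀ else (((i:ℕ):ℝ) • e0 - e1) with hγdef
  have hγj0 : ∀ i, i ≠ i₀ → (γ i) j0 = ((i:ℕ):ℝ) := by
    intro i hi; simp [hγdef, hi, he00, he10]
  have hγj1 : ∀ i, i ≠ i₀ → (γ i) j1 = -1 := by
    intro i hi; simp [hγdef, hi, he01, he11]
  have hγ1 : ∀ i, i ≠ i₀ → ip (v i) (γ i) = 0 := by
    intro i hi
    rw [hipv, hγj0 i hi, hγj1 i hi]
    ring
  have hγ2 : ∀ i, ip (v i₀) (γ i) ≠ 0 := by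
    intro i
    rcases eq_or_ne i i₀ with rfl | hi
    · simp only [hγdef, if_pos rfl]
      exact hvv0
    · rw [hipv, hγj0 i hi, hγj1 i hi]
      have hne : ((i:ℕ):ℝ) ≠ ((i₀:ℕ):ℝ) := by
        intro hcast
        exact hi (Fin.val_injective (Nat.cast_injective hcast))
      intro h0
      rcases mul_eq_zero.mp h0 with h | h
      · exact (hccpos i₀).ne' h
      · apply hne
        have : ((i:ℕ):ℝ) - ((i₀:ℕ):ℝ) = 0 := by linarith
        linarith
  -- the list of difference steps
  set l₀ : List (Fin d → ℝ) := (List.ofFn β) ++ (List.ofFn γ) with hl₀def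
  have hlen₀ : l₀.length = N := by
    simp [hl₀def, hNdef]
    omega
  have hipl₀ : ∀ z ∈ l₀, ip (v i₀) z ≠ 0 := by
    intro z hz
    rw [hl₀def, List.mem_append] at hz
    rcases hz with hz | hz
    · obtain ⟨jj, rfl⟩ := List.mem_ofFn.mp hz
      exact hβ2 jj
    · obtain ⟨i, rfl⟩ := List.mem_ofFn.mp hz
      exact hγ2 i
  set R : ℝ := (l₀.map norm).sum + 1 with hRdef
  have hsumnn : 0 ≤ (l₀.map norm).sum := List.sum_nonneg (by
    intro x hx
    obtain ⟨z, _, rfl⟩ := List.mem_map.mp hx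
    exact norm_nonneg z)
  have hR : 0 < R := by rw [hRdef]; linarith
  have hzR : ∀ z ∈ l₀, ‖z‖ ≤ R := by
    intro z hz
    have : ‖z‖ ≤ (l₀.map norm).sum :=
      List.single_le_sum (by
        intro x hx
        obtain ⟨z', _, rfl⟩ := List.mem_map.mp hx
        exact norm_nonneg z') _ (List.mem_map.mpr ⟨z, hz, rfl⟩)
    rw [hRdef]; linarith
  set ε : ℝ := r / (2 * (N + 1) * R) with hεdef
  have hε : 0 < ε := by
    rw [hεdef]
    apply div_pos hr
    positivity
  set l : List (Fin d → ℝ) := l₀.map (fun z => ε • z) with hldef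
  have hlen : l.length = N := by rw [hldef, List.length_map, hlen₀]
  -- all relevant shifted points stay in the ball
  have hsub : ∀ t : List (Fin d → ℝ), t.Sublist l → x₀ + t.sum ∈ Metric.ball x₀ r := by
    intro t ht
    have hbound : ∀ z ∈ t, ‖z‖ ≤ ε * R := by
      intro z hz
      have hz' : z ∈ l := ht.subset hz
      rw [hldef] at hz'
      obtain ⟨z₀, hz₀, rfl⟩ := List.mem_map.mp hz'
      rw [norm_smul]
      calc ‖ε‖ * ‖z₀‖ = ε * ‖z₀‖ := by rw [Real.norm_of_nonneg hε.le]
        _ ≤ ε * R := by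
          apply mul_le_mul_of_nonneg_left (hzR z₀ hz₀) hε.le
    have h1 : ‖t.sum‖ ≤ t.length * (ε * R) := list_norm_sum_le t (ε * R) hbound
    have hεR : ε * R = r / (2 * (N + 1)) := by
      rw [hεdef]
      field_simp
    have h2 : (t.length : ℝ) ≤ N := by
      have := ht.length_le
      rw [hlen] at this
      exact_mod_cast this
    have h3 : ‖t.sum‖ < r := by
      rw [hεR] at h1
      have hNpos : (0:ℝ) < 2 * ((N:ℝ) + 1) := by positivity
      have h4 : (t.length:ℝ) * (r / (2*((N:ℝ)+1))) ≤ (N:ℝ) * (r / (2*((N:ℝ)+1))) :=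
        mul_le_mul_of_nonneg_right h2 (by positivity)
      have h5 : (N:ℝ) * (r / (2*((N:ℝ)+1))) < r := by
        rw [mul_div_assoc']
        rw [div_lt_iff₀ hNpos]
        nlinarith
      linarith
    rw [Metric.mem_ball]
    have hdd : dist (x₀ + t.sum) x₀ = ‖t.sum‖ := by
      rw [dist_eq_norm, add_sub_cancel_left]
    rw [hdd]
    exact h3
  -- the adversary sum is annihilated by the composite difference
  have hfz : mdiff l (fun x => ∑ i, g i (ip (a i) x)) = fun _ => 0 := by
    rw [mdiff_sum]
    funext x
    apply Finset.sum_eq_zero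
    intro jj _
    have hmem : ε • β jj ∈ l := by
      rw [hldef]
      exact List.mem_map.mpr ⟨β jj, by
        rw [hl₀def, List.mem_append]
        exact Or.inl (List.mem_ofFn.mpr ⟨jj, rfl⟩), rfl⟩
    have hkill := mdiff_kill (f := fun x => g jj (ip (a jj) x)) hmem (by
      intro x
      simp only [ip_add_right, ip_smul_right, hβ1 jj, mul_zero, add_zero])
    rw [hkill]
  -- compute the composite difference of `p`
  have hps : mdiff l p x₀ = ∑ i : Fin (n+1), mdiff l (fun x => (ip (v i) x) ^ N) x₀ :=
    congrFun (mdiff_sum Finset.univ (fun (i : Fin (n+1)) (x : Fin d → ℝ) => (ip (v i) x) ^ N) l) x₀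
  have hkillγ : ∀ i, i ≠ i₀ → mdiff l (fun x => (ip (v i) x) ^ N) = fun _ => 0 := by
    intro i hi
    have hmem : ε • γ i ∈ l := by
      rw [hldef]
      exact List.mem_map.mpr ⟨γ i, by
        rw [hl₀def, List.mem_append]
        exact Or.inr (List.mem_ofFn.mpr ⟨i, rfl⟩), rfl⟩
    exact mdiff_kill hmem (by
      intro x
      simp only [ip_add_right, ip_smul_right, hγ1 i hi, mul_zero, add_zero])
  -- the surviving term via univariate polynomial differences
  set steps : List ℝ := l.map (fun b => ip (v i₀) b) with hstepsdef
  set Q : Polynomial ℝ := pdiff steps (Polynomial.X ^ N) with hQdef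
  have hmr : mdiff l (fun x => (ip (v i₀) x) ^ N) = fun x => Q.eval (ip (v i₀) x) := by
    have h1 : (fun x => (ip (v i₀) x) ^ N)
        = fun x => (Polynomial.X ^ N : Polynomial ℝ).eval (ip (v i₀) x) := by
      funext x
      simp
    rw [h1, mdiff_ridge]
  -- combine: Q.eval (ip (v i₀) x₀) = 0
  have hx₀K : ∀ t : List (Fin d → ℝ), t.Sublist l → x₀ + t.sum ∈ K :=
    fun t ht => hballK (hsub t ht)
  have hloc : mdiff l p x₀ = mdiff l (fun x => ∑ i, g i (ip (a i) x)) x₀ :=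
    mdiff_local_eq (B := K) hpe hx₀K
  have hz1 : mdiff l p x₀ = Q.eval (ip (v i₀) x₀) := by
    rw [hps]
    rw [Finset.sum_eq_single_of_mem i₀ (Finset.mem_univ i₀)]
    · rw [hmr]
    · intro i _ hi
      rw [hkillγ i hi]
  have hz2 : Q.eval (ip (v i₀) x₀) = 0 := by
    rw [← hz1, hloc, hfz]
  -- but Q is a nonzero constant
  have hslen : steps.length = N := by rw [hstepsdef, List.length_map, hlen]
  have hdegX : (Polynomial.X ^ N : Polynomial ℝ).degree ≤ (N : ℕ) := Polynomial.degree_X_pow_le N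
  have hQdeg : Q.degree ≤ ((N - steps.length : ℕ) : WithBot ℕ) :=
    pdiff_degree_le steps _ N hdegX (le_of_eq hslen)
  have hQdeg0 : Q.degree ≤ 0 := by
    rw [hslen] at hQdeg
    simpa using hQdeg
  have hQC : Q = Polynomial.C (Q.coeff 0) := Polynomial.eq_C_of_degree_le_zero hQdeg0
  have hQcoeff : Q.coeff 0 = (N.descFactorial N : ℝ) * steps.prod * 1 := by
    have := pdiff_coeff_top steps (Polynomial.X ^ N) N hdegX (le_of_eq hslen)
    rw [hslen, Nat.sub_self] at this
    rw [hQdef, this]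
    simp
  have hprod : steps.prod ≠ 0 := by
    apply List.prod_ne_zero
    intro h0
    rw [hstepsdef] at h0
    obtain ⟨b, hb, hip0⟩ := List.mem_map.mp h0
    rw [hldef] at hb
    obtain ⟨z, hz, rfl⟩ := List.mem_map.mp hb
    rw [ip_smul_right] at hip0
    rcases mul_eq_zero.mp hip0 with h | h
    · exact hε.ne' h
    · exact hipl₀ z hz h
  have hQne : Q.coeff 0 ≠ 0 := by
    rw [hQcoeff, Nat.descFactorial_self, mul_one]
    apply mul_ne_zero _ hprod
    exact_mod_cast Nat.factorial_ne_zero N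
  rw [hQC] at hz2
  rw [Polynomial.eval_C] at hz2
  exact hQne hz2
end

section
/- Let d ≥ 2 be a natural number, let K ⊂ ℝ^d be a compact set with nonempty interior, and let q ∈ [1, ∞). Then for every n ∈ ℕ₀ the inclusion { f|_K : f ∈ R_n^d, f|_K ∈ L^q(K) } ⊊ { f|_K : f ∈ R_{n+1}^d, f|_K ∈ L^q(K) } is strict (as subsets of L^q(K), i.e., up to equality almost everywhere). -/
open MeasureTheory

noncomputable section RidgeAux

namespace RidgeAux

/-- dot product on `Fin d → ℝ`, in the order used in `Ridge`. -/
def dotp {d : ℕ} (b x : Fin d → ℝ) : ℝ := ∑ j, b j * x j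

lemma dotp_add_right {d : ℕ} (b x c : Fin d → ℝ) :
    dotp b (x + c) = dotp b x + dotp b c := by
  simp [dotp, mul_add, Finset.sum_add_distrib]

lemma dotp_smul_right {d : ℕ} (b : Fin d → ℝ) (ε : ℝ) (c : Fin d → ℝ) :
    dotp b (ε • c) = ε * dotp b c := by
  unfold dotp
  rw [Finset.mul_sum]
  exact Finset.sum_congr rfl fun j _ => by simp [smul_eq_mul]; ring

/-- univariate finite difference. -/
def udiff (α : ℝ) (g : ℝ → ℝ) : ℝ → ℝ := fun t => g (t + α) - g t

/-- iterated univariate finite differences; head of list applied first. -/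
def udiffList : List ℝ → (ℝ → ℝ) → (ℝ → ℝ)
  | [], g => g
  | α :: A, g => udiffList A (udiff α g)

lemma udiffList_congr {A : List ℝ} {g h : ℝ → ℝ} (e : g = h) :
    udiffList A g = udiffList A h := by rw [e]

lemma udiffList_zero (A : List ℝ) : udiffList A (fun _ => 0) = fun _ => 0 := by
  induction A with
  | nil => rfl
  | cons α A ih =>
      show udiffList A (udiff α fun _ => 0) = _
      rw [udiffList_congr (h := fun _ => 0) (by funext t; simp [udiff])]
      exact ih

lemma udiffList_eq_zero_of_zero_mem {A : List ℝ} (h : (0:ℝ) ∈ A) (g : ℝ → ℝ) :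
    udiffList A g = fun _ => 0 := by
  induction A generalizing g with
  | nil => simp at h
  | cons α A ih =>
      rcases List.mem_cons.1 h with h0 | hm
      · subst h0
        show udiffList A (udiff 0 g) = _
        rw [udiffList_congr (h := fun _ => 0) (by funext t; simp [udiff])]
        exact udiffList_zero A
      · exact ih hm _

lemma udiffList_sum {ι : Type*} (A : List ℝ) (s : Finset ι) (F : ι → ℝ → ℝ) :
    udiffList A (fun t => ∑ i ∈ s, F i t) = fun t => ∑ i ∈ s, udiffList A (F i) t := by
  induction A generalizing F with
  | nil => rfl
  | cons α A ih =>
      show udiffList A (udiff α fun t => ∑ i ∈ s, F i t) = _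
      rw [udiffList_congr (h := fun t => ∑ i ∈ s, udiff α (F i) t)
        (by funext t; simp [udiff, Finset.sum_sub_distrib])]
      exact ih _

lemma udiffList_const_mul (A : List ℝ) (c : ℝ) (F : ℝ → ℝ) :
    udiffList A (fun t => c * F t) = fun t => c * udiffList A F t := by
  induction A generalizing F with
  | nil => rfl
  | cons α A ih =>
      show udiffList A (udiff α fun t => c * F t) = _
      rw [udiffList_congr (h := fun t => c * udiff α F t)
        (by funext t; simp [udiff]; ring)]
      exact ih _

/-- main univariate computation. -/
lemma udiffList_pow (A : List ℝ) (m : ℕ) (h : m ≤ A.length) :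
    udiffList A (fun t => t ^ m)
      = fun _ => if A.length = m then (m.factorial : ℝ) * A.prod else 0 := by
  induction A generalizing m with
  | nil =>
      have hm0 : m = 0 := by simpa using h
      subst hm0
      show (fun t : ℝ => t ^ 0) = _
      simp
  | cons α A ih =>
      show udiffList A (udiff α fun t => t ^ m) = _
      have hlen : (α :: A).length = A.length + 1 := rfl
      rcases Nat.eq_zero_or_pos m with hm | hm
      · subst hm
        rw [udiffList_congr (h := fun _ => 0) (by funext t; simp [udiff])]
        rw [udiffList_zero]
        simp
      · have hexp : udiff α (fun t => t ^ m)
            = fun t => ∑ j ∈ Finset.range m, ((m.choose j : ℝ) * α ^ (m - j)) * t ^ j := by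
          funext t
          have h1 := add_pow t α m
          have h2 : ∑ j ∈ Finset.range (m+1), t ^ j * α ^ (m - j) * (m.choose j : ℝ)
              = (∑ j ∈ Finset.range m, ((m.choose j : ℝ) * α ^ (m - j)) * t ^ j) + t ^ m := by
            rw [Finset.sum_range_succ]
            congr 1
            · exact Finset.sum_congr rfl fun j hj => by ring
            · simp
          simp only [udiff]
          rw [h1, h2]
          ring
        rw [udiffList_congr hexp, udiffList_sum]
        have hA : ∀ j ∈ Finset.range m, j ≤ A.length := by
          intro j hj
          have := Finset.mem_range.1 hj
          simp at h
          omega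
        funext t
        rw [Finset.sum_congr rfl (fun j hj => by
          rw [udiffList_const_mul, ih j (hA j hj)])]
        by_cases hl : A.length = m - 1
        · have hmem : m - 1 ∈ Finset.range m := by simp; omega
          rw [Finset.sum_eq_single_of_mem (m-1) hmem (fun j hj hne => by
            rw [if_neg (by omega)]; ring)]
          rw [if_pos hl]
          have hml : (α :: A).length = m := by simp; omega
          rw [if_pos hml]
          have hch : (m.choose (m-1) : ℝ) = m := by
            have : m.choose (m-1) = m.choose 1 := by
              have := Nat.choose_symm (n := m) (k := 1) (by omega)
              simpa using this
            rw [this, Nat.choose_one_right]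
          have hfac : (m.factorial : ℝ) = m * (m-1).factorial := by
            rcases Nat.exists_eq_succ_of_ne_zero (by omega : m ≠ 0) with ⟨k, rfl⟩
            simp [Nat.factorial_succ]
          rw [hch, hfac]
          have hpow : α ^ (m - (m-1)) = α := by
            rw [show m - (m-1) = 1 by omega, pow_one]
          rw [hpow]
          simp [List.prod_cons]
          ring
        · have hne : ¬((α :: A).length = m) := by
            simp only [List.length_cons]
            omega
          rw [if_neg hne]
          apply Finset.sum_eq_zero
          intro j hj
          have := Finset.mem_range.1 hj
          rw [if_neg (by omega)]
          ring

variable {d : ℕ}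

/-- multivariate finite difference. -/
def vdiff (c : Fin d → ℝ) (f : (Fin d → ℝ) → ℝ) : (Fin d → ℝ) → ℝ :=
  fun x => f (x + c) - f x

/-- iterated multivariate finite differences; head of list applied first. -/
def vdiffList : List (Fin d → ℝ) → ((Fin d → ℝ) → ℝ) → ((Fin d → ℝ) → ℝ)
  | [], f => f
  | c :: L, f => vdiffList L (vdiff c f)

lemma vdiffList_congr' {L : List (Fin d → ℝ)} {f h : (Fin d → ℝ) → ℝ} (e : f = h) :
    vdiffList L f = vdiffList L h := by rw [e]

/-- iterated differences of a ridge function are ridge with the same direction. -/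
lemma vdiffList_ridge (L : List (Fin d → ℝ)) (b : Fin d → ℝ) (g : ℝ → ℝ) :
    vdiffList L (fun x => g (dotp b x))
      = fun x => udiffList (L.map (dotp b)) g (dotp b x) := by
  induction L generalizing g with
  | nil => rfl
  | cons c L ih =>
      show vdiffList L (vdiff c fun x => g (dotp b x)) = _
      rw [vdiffList_congr' (h := fun x => (udiff (dotp b c) g) (dotp b x))
        (by funext x; simp [vdiff, udiff, dotp_add_right])]
      rw [ih]
      rfl

lemma vdiffList_sum {ι : Type*} (L : List (Fin d → ℝ)) (s : Finset ι)
    (F : ι → (Fin d → ℝ) → ℝ) :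
    vdiffList L (fun x => ∑ i ∈ s, F i x) = fun x => ∑ i ∈ s, vdiffList L (F i) x := by
  induction L generalizing F with
  | nil => rfl
  | cons c L ih =>
      show vdiffList L (vdiff c fun x => ∑ i ∈ s, F i x) = _
      rw [vdiffList_congr' (h := fun x => ∑ i ∈ s, vdiff c (F i) x)
        (by funext x; simp [vdiff, Finset.sum_sub_distrib])]
      exact ih _

/-- the translates used by `vdiffList L` at a point. -/
def sumsL : List (Fin d → ℝ) → List (Fin d → ℝ)
  | [] => [0]
  | c :: L => sumsL L ++ (sumsL L).map (c + ·)

lemma vdiffList_eq_of_eq_on_sums {L : List (Fin d → ℝ)} {f g : (Fin d → ℝ) → ℝ}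
    {x : Fin d → ℝ} (h : ∀ s ∈ sumsL L, f (x + s) = g (x + s)) :
    vdiffList L f x = vdiffList L g x := by
  induction L generalizing f g with
  | nil =>
      have := h 0 (by simp [sumsL])
      simpa [vdiffList] using this
  | cons c L ih =>
      show vdiffList L (vdiff c f) x = vdiffList L (vdiff c g) x
      apply ih
      intro s hs
      have hL : sumsL (c :: L) = sumsL L ++ (sumsL L).map (c + ·) := rfl
      have h1 : f (x + s) = g (x + s) :=
        h s (by rw [hL]; exact List.mem_append.2 (Or.inl hs))
      have h2 : f (x + s + c) = g (x + s + c) := by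
        have := h (c + s) (by
          rw [hL]
          exact List.mem_append.2 (Or.inr (List.mem_map.2 ⟨s, hs, rfl⟩)))
        have e : x + (c + s) = x + s + c := by abel
        rw [e] at this
        exact this
      simp [vdiff, h1, h2]

lemma norm_le_of_mem_sumsL {L : List (Fin d → ℝ)} {s : Fin d → ℝ} (hs : s ∈ sumsL L) :
    ‖s‖ ≤ (L.map (fun c => ‖c‖)).sum := by
  induction L generalizing s with
  | nil =>
      simp [sumsL] at hs
      simp [hs]
  | cons c L ih =>
      simp only [sumsL, List.mem_append, List.mem_map] at hs
      simp only [List.map_cons, List.sum_cons]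
      rcases hs with hs | ⟨t, ht, rfl⟩
      · have := ih hs
        have h0 : (0:ℝ) ≤ ‖c‖ := norm_nonneg c
        linarith
      · have := ih ht
        have h1 : ‖c + t‖ ≤ ‖c‖ + ‖t‖ := norm_add_le c t
        linarith

/-- a vector supported on two coordinates. -/
def pl (i0 i1 : Fin d) (p q : ℝ) : Fin d → ℝ :=
  fun j => if j = i0 then p else if j = i1 then q else 0

lemma pl_apply0 (i0 i1 : Fin d) (p q : ℝ) : pl i0 i1 p q i0 = p := by simp [pl]

lemma pl_apply1 {i0 i1 : Fin d} (h01 : i0 ≠ i1) (p q : ℝ) : pl i0 i1 p q i1 = q := by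
  simp [pl, h01.symm]

lemma sum_two {i0 i1 : Fin d} (h01 : i0 ≠ i1) (w : Fin d → ℝ)
    (hw : ∀ j, j ≠ i0 → j ≠ i1 → w j = 0) : ∑ j, w j = w i0 + w i1 := by
  classical
  rw [← Finset.sum_subset (Finset.subset_univ ({i0, i1} : Finset (Fin d)))
    (fun j _ hj => by
      simp only [Finset.mem_insert, Finset.mem_singleton] at hj
      push_neg at hj
      exact hw j hj.1 hj.2)]
  exact Finset.sum_pair h01

lemma dotp_pl_left {i0 i1 : Fin d} (h01 : i0 ≠ i1) (p q : ℝ) (w : Fin d → ℝ) :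
    dotp (pl i0 i1 p q) w = p * w i0 + q * w i1 := by
  unfold dotp
  rw [sum_two h01 _ (fun j hj0 hj1 => by simp [pl, hj0, hj1])]
  rw [pl_apply0, pl_apply1 h01]

lemma dotp_pl_right {i0 i1 : Fin d} (h01 : i0 ≠ i1) (p q : ℝ) (w : Fin d → ℝ) :
    dotp w (pl i0 i1 p q) = w i0 * p + w i1 * q := by
  unfold dotp
  rw [sum_two h01 _ (fun j hj0 hj1 => by simp [pl, hj0, hj1])]
  rw [pl_apply0, pl_apply1 h01]

lemma sum_sq_pl {i0 i1 : Fin d} (h01 : i0 ≠ i1) (p q : ℝ) :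
    ∑ j, (pl i0 i1 p q j) ^ 2 = p ^ 2 + q ^ 2 := by
  rw [sum_two h01 _ (fun j hj0 hj1 => by simp [pl, hj0, hj1])]
  rw [pl_apply0, pl_apply1 h01]

lemma norm_pl_le {i0 i1 : Fin d} {p q : ℝ} (hp : |p| ≤ 1) (hq : |q| ≤ 1) :
    ‖pl i0 i1 p q‖ ≤ 1 := by
  rw [pi_norm_le_iff_of_nonneg (by norm_num)]
  intro j
  rw [Real.norm_eq_abs]
  unfold pl
  split
  · exact hp
  · split
    · exact hq
    · simp

lemma l2loc_pow (m : ℕ) : L2loc (fun t => t ^ m) := by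
  intro C hC
  have hfin : IsFiniteMeasure (volume.restrict C) :=
    ⟨by rw [Measure.restrict_apply_univ]; exact hC.measure_lt_top⟩
  obtain ⟨M, hM⟩ := hC.exists_bound_of_continuousOn (continuous_pow m).continuousOn
  exact MemLp.of_bound ((continuous_pow m).aestronglyMeasurable) M
    (by
      filter_upwards [ae_restrict_mem hC.measurableSet] with t ht
      exact hM t ht)

/-- the angles used for the extra directions. -/
def θfun (n : ℕ) (i : Fin (n + 1)) : ℝ := (i : ℝ) * (Real.pi / (2 * (n + 1)))

lemma sin_theta_pos {n : ℕ} {i k : Fin (n + 1)} (h : (k : ℕ) < (i : ℕ)) :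
    0 < Real.sin (θfun n i - θfun n k) := by
  have hδ : 0 < Real.pi / (2 * ((n : ℝ) + 1)) := by positivity
  have hik : ((k : ℕ) : ℝ) + 1 ≤ ((i : ℕ) : ℝ) := by exact_mod_cast h
  have hin : ((i : ℕ) : ℝ) ≤ n := by exact_mod_cast Fin.is_le i
  have hk0 : (0 : ℝ) ≤ ((k : ℕ) : ℝ) := by positivity
  have hdiff : θfun n i - θfun n k
      = (((i : ℕ) : ℝ) - ((k : ℕ) : ℝ)) * (Real.pi / (2 * ((n : ℝ) + 1))) := by
    unfold θfun
    push_cast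
    ring
  apply Real.sin_pos_of_pos_of_lt_pi
  · rw [hdiff]
    nlinarith
  · rw [hdiff]
    have h2 : (((i : ℕ) : ℝ) - ((k : ℕ) : ℝ)) / (2 * ((n : ℝ) + 1)) < 1 := by
      rw [div_lt_one (by positivity)]
      linarith
    have hpi := Real.pi_pos
    calc (((i : ℕ) : ℝ) - ((k : ℕ) : ℝ)) * (Real.pi / (2 * ((n : ℝ) + 1)))
        = Real.pi * ((((i : ℕ) : ℝ) - ((k : ℕ) : ℝ)) / (2 * ((n : ℝ) + 1))) := by ring
      _ < Real.pi * 1 := by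
          apply mul_lt_mul_of_pos_left h2 hpi
      _ = Real.pi := by ring

lemma sin_theta_ne {n : ℕ} {i k : Fin (n + 1)} (h : i ≠ k) :
    Real.sin (θfun n i - θfun n k) ≠ 0 := by
  rcases lt_or_gt_of_ne (fun e => h (Fin.ext e) : (i : ℕ) ≠ (k : ℕ)) with hlt | hgt
  · have := sin_theta_pos (i := k) (k := i) hlt
    intro h0
    rw [show θfun n i - θfun n k = -(θfun n k - θfun n i) by ring, Real.sin_neg] at h0
    simp only [neg_eq_zero] at h0
    exact (ne_of_gt this).symm h0.symm
  · exact ne_of_gt (sin_theta_pos hgt)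

lemma theta_uniq {n : ℕ} {u v : ℝ} (huv : ¬(u = 0 ∧ v = 0)) {i k : Fin (n + 1)}
    (h1 : Real.cos (θfun n i) * u + Real.sin (θfun n i) * v = 0)
    (h2 : Real.cos (θfun n k) * u + Real.sin (θfun n k) * v = 0) : i = k := by
  by_contra hne
  have hs := sin_theta_ne (n := n) hne
  have hu : u * Real.sin (θfun n i - θfun n k) = 0 := by
    rw [Real.sin_sub]
    linear_combination Real.sin (θfun n i) * h2 - Real.sin (θfun n k) * h1
  have hv : v * Real.sin (θfun n i - θfun n k) = 0 := by
    rw [Real.sin_sub]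
    linear_combination Real.cos (θfun n k) * h1 - Real.cos (θfun n i) * h2
  exact huv ⟨(mul_eq_zero.1 hu).resolve_right hs, (mul_eq_zero.1 hv).resolve_right hs⟩

lemma vdiffList_pow_eq (L : List (Fin d → ℝ)) (b : Fin d → ℝ) (m : ℕ) (h : L.length = m) :
    vdiffList L (fun x => (dotp b x) ^ m)
      = fun _ => (m.factorial : ℝ) * (L.map (dotp b)).prod := by
  show vdiffList L (fun x => (fun t => t ^ m) (dotp b x)) = _
  rw [vdiffList_ridge L b (fun t => t ^ m)]
  funext x
  rw [udiffList_pow (L.map (dotp b)) m (by simp [h])]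
  simp [h]

lemma vdiffList_pow_kill (L : List (Fin d → ℝ)) (b w : Fin d → ℝ) (m : ℕ)
    (hw : w ∈ L) (h0 : dotp b w = 0) :
    vdiffList L (fun x => (dotp b x) ^ m) = fun _ => 0 := by
  show vdiffList L (fun x => (fun t => t ^ m) (dotp b x)) = _
  rw [vdiffList_ridge L b (fun t => t ^ m)]
  funext x
  rw [udiffList_eq_zero_of_zero_mem (List.mem_map.2 ⟨w, hw, h0⟩)]

lemma vdiffList_ridge_kill (L : List (Fin d → ℝ)) (b : Fin d → ℝ) (g : ℝ → ℝ)
    (w : Fin d → ℝ) (hw : w ∈ L) (h0 : dotp b w = 0) :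
    vdiffList L (fun x => g (dotp b x)) = fun _ => 0 := by
  rw [vdiffList_ridge]
  funext x
  rw [udiffList_eq_zero_of_zero_mem (List.mem_map.2 ⟨w, hw, h0⟩)]

lemma vdiffList_sum_apply {ι : Type*} (L : List (Fin d → ℝ)) (s : Finset ι)
    (F : ι → (Fin d → ℝ) → ℝ) (x : Fin d → ℝ) :
    vdiffList L (fun x => ∑ i ∈ s, F i x) x = ∑ i ∈ s, vdiffList L (F i) x :=
  congrFun (vdiffList_sum L s F) x

lemma vdiffList_pow_eq_apply (L : List (Fin d → ℝ)) (b : Fin d → ℝ) (m : ℕ)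
    (h : L.length = m) (x : Fin d → ℝ) :
    vdiffList L (fun x => (dotp b x) ^ m) x
      = (m.factorial : ℝ) * (L.map (dotp b)).prod :=
  congrFun (vdiffList_pow_eq L b m h) x

lemma vdiffList_pow_kill_apply (L : List (Fin d → ℝ)) (b w : Fin d → ℝ) (m : ℕ)
    (hw : w ∈ L) (h0 : dotp b w = 0) (x : Fin d → ℝ) :
    vdiffList L (fun x => (dotp b x) ^ m) x = 0 :=
  congrFun (vdiffList_pow_kill L b w m hw h0) x

lemma vdiffList_ridge_kill_apply (L : List (Fin d → ℝ)) (b : Fin d → ℝ) (g : ℝ → ℝ)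
    (w : Fin d → ℝ) (hw : w ∈ L) (h0 : dotp b w = 0) (x : Fin d → ℝ) :
    vdiffList L (fun x => g (dotp b x)) x = 0 :=
  congrFun (vdiffList_ridge_kill L b g w hw h0) x

end RidgeAux
end RidgeAux

open RidgeAux

/-- For `d ≥ 2`, a compact set `K ⊂ ℝ^d` with nonempty interior and
`q ∈ [1, ∞)`, the set of (a.e. equivalence classes on `K` of) sums of `n` ridge functions lying
in `L^q(K)` is strictly contained in the corresponding set for `n + 1` ridge functions. -/
theorem ridge_restrict_Lq_ssubset (d : ℕ) (hd : 2 ≤ d) (K : Set (Fin d → ℝ))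
    (hK : IsCompact K) (hKint : (interior K).Nonempty) (q : ℝ) (hq : 1 ≤ q) (n : ℕ) :
    { h : (Fin d → ℝ) → ℝ | ∃ f ∈ Ridge d n,
        MemLp f (ENNReal.ofReal q) (volume.restrict K) ∧ h =ᵐ[volume.restrict K] f }
      ⊂ { h : (Fin d → ℝ) → ℝ | ∃ f ∈ Ridge d (n + 1),
        MemLp f (ENNReal.ofReal q) (volume.restrict K) ∧ h =ᵐ[volume.restrict K] f } := by
  classical
  set i0 : Fin d := ⟨0, by omega⟩ with hi0
  set i1 : Fin d := ⟨1, by omega⟩ with hi1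
  have h01 : i0 ≠ i1 := by simp [hi0, hi1, Fin.ext_iff]
  -- monotonicity of `Ridge`
  have hmono : Ridge d n ⊆ Ridge d (n + 1) := by
    rintro f ⟨a, g, ha, hg, hfe⟩
    refine ⟨Fin.snoc a (pl i0 i1 1 0), Fin.snoc g (fun _ => 0), ?_, ?_, ?_⟩
    · intro i
      refine Fin.lastCases ?_ ?_ i
      · rw [Fin.snoc_last, sum_sq_pl h01]
        norm_num
      · intro i
        rw [Fin.snoc_castSucc]
        exact ha i
    · intro i
      refine Fin.lastCases ?_ ?_ i
      · rw [Fin.snoc_last]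
        intro C hC
        exact MemLp.zero'
      · intro i
        rw [Fin.snoc_castSucc]
        exact hg i
    · rw [hfe]
      funext x
      rw [Fin.sum_univ_castSucc]
      simp [Fin.snoc_castSucc, Fin.snoc_last]
  rw [Set.ssubset_iff_of_subset (by
    rintro h ⟨f, hf, hmp, hae⟩
    exact ⟨f, hmono hf, hmp, hae⟩)]
  -- the witness
  set m : ℕ := 2 * n + 1 with hm
  set a : Fin (n + 1) → Fin d → ℝ :=
    fun i => pl i0 i1 (Real.cos (θfun n i)) (Real.sin (θfun n i)) with haDef
  set P : (Fin d → ℝ) → ℝ := fun x => ∑ i, (dotp (a i) x) ^ m with hPDef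
  have hPcont : Continuous P := by
    simp only [hPDef]
    apply continuous_finset_sum
    intro i _
    exact (continuous_finset_sum _ fun j _ =>
      continuous_const.mul (continuous_apply j)).pow m
  have hfinK : IsFiniteMeasure (volume.restrict K) :=
    ⟨by rw [Measure.restrict_apply_univ]; exact hK.measure_lt_top⟩
  refine ⟨P, ⟨P, ⟨a, fun _ => fun t => t ^ m, ?_, fun _ => l2loc_pow m, ?_⟩, ?_,
    Filter.EventuallyEq.rfl⟩, ?_⟩
  · intro i
    simp only [haDef]
    rw [sum_sq_pl h01]
    exact Real.cos_sq_add_sin_sq _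
  · simp only [hPDef]
    rfl
  · obtain ⟨M, hM⟩ := hK.exists_bound_of_continuousOn hPcont.continuousOn
    exact MemLp.of_bound hPcont.aestronglyMeasurable M
      (by filter_upwards [ae_restrict_mem hK.measurableSet] with t ht using hM t ht)
  -- the witness is not in the smaller class
  rintro ⟨f, ⟨b, g, hb, hgl, hfe⟩, hmp, hae⟩
  obtain ⟨x0, hx0⟩ := hKint
  obtain ⟨r, hr, hball⟩ := Metric.isOpen_iff.1 isOpen_interior x0 hx0
  have hballK : Metric.ball x0 r ⊆ K := hball.trans interior_subset
  set ε : ℝ := r / (4 * (n + 1)) with hε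
  have hε0 : 0 < ε := by rw [hε]; positivity
  -- perpendicular directions killing the `g j`
  set u : Fin n → ℝ := fun j => if b j i0 = 0 ∧ b j i1 = 0 then 1 else -(b j i1) with hu
  set v : Fin n → ℝ := fun j => if b j i0 = 0 ∧ b j i1 = 0 then 0 else b j i0 with hv
  set c : Fin n → Fin d → ℝ := fun j => pl i0 i1 (u j) (v j) with hc
  have huv : ∀ j, ¬(u j = 0 ∧ v j = 0) := by
    rintro j ⟨hu0, hv0⟩
    by_cases hcase : b j i0 = 0 ∧ b j i1 = 0
    · simp only [hu, if_pos hcase] at hu0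
      norm_num at hu0
    · simp only [hu, if_neg hcase] at hu0
      simp only [hv, if_neg hcase] at hv0
      exact hcase ⟨hv0, neg_eq_zero.1 hu0⟩
  have hbc : ∀ j, dotp (b j) (c j) = 0 := by
    intro j
    simp only [hc]
    rw [dotp_pl_right h01]
    by_cases hcase : b j i0 = 0 ∧ b j i1 = 0
    · simp only [hu, hv, if_pos hcase]
      rw [hcase.1]
      ring
    · simp only [hu, hv, if_neg hcase]
      ring
  have hQ : ∀ j i, dotp (a i) (c j)
      = Real.cos (θfun n i) * u j + Real.sin (θfun n i) * v j := by
    intro j i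
    simp only [haDef, hc]
    rw [dotp_pl_left h01, pl_apply0, pl_apply1 h01]
  -- a surviving direction
  set φ : Fin n → Fin (n + 1) :=
    fun j => if hx : ∃ i, dotp (a i) (c j) = 0 then hx.choose else ⟨0, Nat.succ_pos n⟩ with hφ
  have hnots : ∃ istar : Fin (n + 1), ∀ j, φ j ≠ istar := by
    by_contra hcon
    push_neg at hcon
    have hsurj : Function.Surjective φ := fun i => hcon i
    have := Fintype.card_le_of_surjective φ hsurj
    simp only [Fintype.card_fin] at this
    omega
  obtain ⟨istar, hstar⟩ := hnots
  have hsurv : ∀ j, dotp (a istar) (c j) ≠ 0 := by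
    intro j h0
    have hx : ∃ i, dotp (a i) (c j) = 0 := ⟨istar, h0⟩
    have hspec : dotp (a hx.choose) (c j) = 0 := hx.choose_spec
    have heq : hx.choose = istar := by
      apply theta_uniq (huv j)
      · rw [← hQ]; exact hspec
      · rw [← hQ]; exact h0
    apply hstar j
    simp only [hφ]
    rw [dif_pos hx]
    exact heq
  -- the second batch of directions
  set c2 : Fin (n + 1) → Fin d → ℝ :=
    fun k => if k = istar then a istar
      else pl i0 i1 (-(Real.sin (θfun n k))) (Real.cos (θfun n k)) with hc2
  have hkill2 : ∀ k, k ≠ istar → dotp (a k) (c2 k) = 0 := by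
    intro k hk
    simp only [hc2, if_neg hk, haDef]
    rw [dotp_pl_left h01, pl_apply0, pl_apply1 h01]
    ring
  have hsurv2 : ∀ k, dotp (a istar) (c2 k) ≠ 0 := by
    intro k
    by_cases hk : k = istar
    · simp only [hc2, if_pos hk, haDef]
      rw [dotp_pl_left h01, pl_apply0, pl_apply1 h01]
      have h1 := Real.cos_sq_add_sin_sq (θfun n istar)
      intro h0
      nlinarith
    · simp only [hc2, if_neg hk, haDef]
      rw [dotp_pl_left h01, pl_apply0, pl_apply1 h01]
      have hsin := sin_theta_ne (n := n) (i := istar) (k := k) (fun e => hk e.symm)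
      rw [Real.sin_sub] at hsin
      intro h0
      apply hsin
      linarith
  set L : List (Fin d → ℝ) :=
    (List.ofFn fun j : Fin n => ε • c j)
      ++ (List.ofFn fun k : Fin (n + 1) => ε • c2 k) with hL
  have hLlen : L.length = m := by
    simp only [hL, List.length_append, List.length_ofFn, hm]
    omega
  -- iterated differences kill f
  have hfe' : f = fun x => ∑ j : Fin n, g j (dotp (b j) x) := hfe
  have hfzero : ∀ x, vdiffList L f x = 0 := by
    intro x
    rw [hfe', vdiffList_sum_apply]
    apply Finset.sum_eq_zero
    intro j _
    have hwmem : ε • c j ∈ L := by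
      rw [hL]
      exact List.mem_append.2 (Or.inl (List.mem_ofFn.2 ⟨j, rfl⟩))
    exact vdiffList_ridge_kill_apply L (b j) (g j) (ε • c j) hwmem
      (by rw [dotp_smul_right, hbc j, mul_zero]) x
  -- iterated differences of P are a nonzero constant
  set Cst : ℝ := (m.factorial : ℝ) * (L.map (dotp (a istar))).prod with hCst
  have hallne : ∀ w ∈ L, dotp (a istar) w ≠ 0 := by
    intro w hw
    rw [hL] at hw
    rcases List.mem_append.1 hw with hw | hw
    · obtain ⟨j, rfl⟩ := List.mem_ofFn.1 hw
      rw [dotp_smul_right]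
      exact mul_ne_zero (ne_of_gt hε0) (hsurv j)
    · obtain ⟨k, rfl⟩ := List.mem_ofFn.1 hw
      rw [dotp_smul_right]
      exact mul_ne_zero (ne_of_gt hε0) (hsurv2 k)
  have hCne : Cst ≠ 0 := by
    rw [hCst]
    refine mul_ne_zero (Nat.cast_ne_zero.2 m.factorial_ne_zero) (List.prod_ne_zero ?_)
    intro h0
    obtain ⟨w, hw, hweq⟩ := List.mem_map.1 h0
    exact hallne w hw hweq
  have hPval : ∀ x, vdiffList L P x = Cst := by
    intro x
    simp only [hPDef]
    rw [vdiffList_sum_apply]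
    rw [Finset.sum_eq_single_of_mem istar (Finset.mem_univ istar) ?_]
    · rw [hCst]
      exact vdiffList_pow_eq_apply L (a istar) m hLlen x
    · intro i _ hne
      have hwmem : ε • c2 i ∈ L := by
        rw [hL]
        exact List.mem_append.2 (Or.inr (List.mem_ofFn.2 ⟨i, rfl⟩))
      exact vdiffList_pow_kill_apply L (a i) (ε • c2 i) m hwmem
        (by rw [dotp_smul_right, hkill2 i hne, mul_zero]) x
  -- measure-theoretic bookkeeping
  set S : Set (Fin d → ℝ) := {x | ¬ P x = f x} with hS
  have hS0 : volume (S ∩ K) = 0 := by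
    have h1 : (volume.restrict K) S = 0 := by
      simp only [hS]
      exact ae_iff.1 hae
    rw [Measure.restrict_apply' hK.measurableSet] at h1
    exact h1
  obtain ⟨N, hSN, hNm, hN0⟩ := exists_measurable_superset_of_null hS0
  set U : Set (Fin d → ℝ) := ⋃ s ∈ {w : Fin d → ℝ | w ∈ sumsL L}, (fun x => x + s) ⁻¹' N with hU
  have hU0 : volume U = 0 := by
    rw [hU, measure_biUnion_null_iff (List.finite_toSet (sumsL L)).countable]
    intro s _
    rw [measure_preimage_add_right]
    exact hN0
  have hb2 : volume (Metric.ball x0 (r / 2)) ≠ 0 :=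
    (Metric.measure_ball_pos volume x0 (by linarith)).ne'
  have hexists : ∃ x, x ∈ Metric.ball x0 (r / 2) ∧ x ∉ U := by
    by_contra hcon
    push_neg at hcon
    exact hb2 (measure_mono_null (fun x hx => hcon x hx) hU0)
  obtain ⟨x, hxball, hxU⟩ := hexists
  -- bound on the translates
  have hbabs : ∀ j jj, |b j jj| ≤ 1 := by
    intro j jj
    have h1 : b j jj ^ 2 ≤ ∑ t, b j t ^ 2 :=
      Finset.single_le_sum (f := fun t => b j t ^ 2) (fun t _ => sq_nonneg _)
        (Finset.mem_univ jj)
    rw [hb j] at h1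
    nlinarith [abs_nonneg (b j jj), sq_abs (b j jj)]
  have hLbound : ∀ w ∈ L, ‖w‖ ≤ ε := by
    intro w hw
    rw [hL] at hw
    have hsmul : ∀ w' : Fin d → ℝ, ‖w'‖ ≤ 1 → ‖ε • w'‖ ≤ ε := by
      intro w' hw'
      rw [norm_smul, Real.norm_eq_abs, abs_of_pos hε0]
      nlinarith
    rcases List.mem_append.1 hw with hw | hw
    · obtain ⟨j, rfl⟩ := List.mem_ofFn.1 hw
      apply hsmul
      simp only [hc]
      apply norm_pl_le
      · simp only [hu]
        split
        · norm_num
        · rw [abs_neg]; exact hbabs j i1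
      · simp only [hv]
        split
        · norm_num
        · exact hbabs j i0
    · obtain ⟨k, rfl⟩ := List.mem_ofFn.1 hw
      apply hsmul
      simp only [hc2]
      split
      · simp only [haDef]
        exact norm_pl_le (Real.abs_cos_le_one _) (Real.abs_sin_le_one _)
      · exact norm_pl_le (by rw [abs_neg]; exact Real.abs_sin_le_one _)
          (Real.abs_cos_le_one _)
  have hsums : ∀ s ∈ sumsL L, ‖s‖ < r / 2 := by
    intro s hs
    have h1 := norm_le_of_mem_sumsL hs
    have h2 : (L.map fun w => ‖w‖).sum ≤ (L.map fun w => ‖w‖).length • ε :=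
      List.sum_le_card_nsmul _ _ (by
        intro t ht
        obtain ⟨w, hw, rfl⟩ := List.mem_map.1 ht
        exact hLbound w hw)
    rw [List.length_map, hLlen, nsmul_eq_mul] at h2
    have hmlt : (m : ℝ) * ε < r / 2 := by
      have hmcast : (m : ℝ) = 2 * (n : ℝ) + 1 := by rw [hm]; push_cast; ring
      have hkey : (2 * (n : ℝ) + 2) * ε = r / 2 := by
        rw [hε]
        field_simp
        ring
      have hlt : (m : ℝ) * ε < (2 * (n : ℝ) + 2) * ε := by
        apply mul_lt_mul_of_pos_right _ hε0
        rw [hmcast]; linarith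
      linarith
    linarith
  -- finish
  have hgood : ∀ s ∈ sumsL L, P (x + s) = f (x + s) := by
    intro s hs
    have hxs : x + s ∈ Metric.ball x0 r := by
      rw [Metric.mem_ball]
      calc dist (x + s) x0 ≤ dist (x + s) x + dist x x0 := dist_triangle _ _ _
        _ < r / 2 + r / 2 := by
            apply add_lt_add
            · rw [dist_comm, dist_self_add_right]
              exact hsums s hs
            · exact Metric.mem_ball.1 hxball
        _ = r := by ring
    have hxsK : x + s ∈ K := hballK hxs
    by_contra hne
    apply hxU
    rw [hU]
    apply Set.mem_biUnion (show s ∈ {w : Fin d → ℝ | w ∈ sumsL L} from hs)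
    exact hSN ⟨hne, hxsK⟩
  have hfinal := vdiffList_eq_of_eq_on_sums (L := L) (f := P) (g := f) (x := x) hgood
  rw [hPval x, hfzero x] at hfinal
  exact hCne hfinal
end

section
/- Let I = [a, b] with a < b, let (n_i)_{i≥1} be an arbitrary sequence of natural numbers, and let (ε_i)_{i≥1} be a sequence of real numbers with ε_i → 0. Then there exists a continuous function f : I → ℝ such that for every i ≥ 1, inf_{r ∈ 𝓡_{n_i}^1(I)} sup_{t ∈ I} |f(t) − r(t)| ≥ ε_i. -/
open MeasureTheory

/-- `RatFun n I` is the set `𝓡_n^1(I)` of functions that agree on `I` with a rational function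
`p/q` where `max {deg p, deg q} ≤ n` and `q` vanishes nowhere on `I`. -/
def RatFun (n : ℕ) (I : Set ℝ) : Set (ℝ → ℝ) :=
  { f | ∃ p q : Polynomial ℝ, p.natDegree ≤ n ∧ q.natDegree ≤ n ∧
        (∀ t ∈ I, q.eval t ≠ 0) ∧ ∀ t ∈ I, f t = p.eval t / q.eval t }

namespace RNU

noncomputable def cseq (n : ℕ → ℕ) (ε : ℕ → ℝ) (k : ℕ) : ℝ :=
  max 0 (sSup (ε '' {i | 1 ≤ i ∧ k ≤ 2 * n i + 1}))

lemma cseq_nonneg (n : ℕ → ℕ) (ε : ℕ → ℝ) (k : ℕ) : 0 ≤ cseq n ε k := le_max_left _ _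

lemma cseq_ge (n : ℕ → ℕ) (ε : ℕ → ℝ) (hb : BddAbove (Set.range ε))
    {i k : ℕ} (hi : 1 ≤ i) (hk : k ≤ 2 * n i + 1) : ε i ≤ cseq n ε k := by
  refine le_trans (le_csSup ?_ ?_) (le_max_right _ _)
  · exact hb.mono (Set.image_subset_range _ _)
  · exact ⟨i, ⟨hi, hk⟩, rfl⟩

lemma cseq_antitone (n : ℕ → ℕ) (ε : ℕ → ℝ) (hb : BddAbove (Set.range ε)) :
    Antitone (cseq n ε) := by
  refine antitone_nat_of_succ_le fun k => ?_
  rcases Set.eq_empty_or_nonempty (ε '' {i | 1 ≤ i ∧ k + 1 ≤ 2 * n i + 1}) with h | h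
  · unfold cseq; rw [h, Real.sSup_empty]; simpa using cseq_nonneg n ε k
  · refine max_le (le_max_left _ _) (le_trans (csSup_le_csSup ?_ h ?_) (le_max_right _ _))
    · exact hb.mono (Set.image_subset_range _ _)
    · exact Set.image_mono fun i hi => ⟨hi.1, le_trans (Nat.le_succ k) hi.2⟩

lemma cseq_tendsto (n : ℕ → ℕ) (ε : ℕ → ℝ)
    (hε : Filter.Tendsto ε Filter.atTop (nhds 0)) :
    Filter.Tendsto (cseq n ε) Filter.atTop (nhds 0) := by
  rw [Metric.tendsto_atTop]
  intro δ hδ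
  obtain ⟨M, hM⟩ := (Metric.tendsto_atTop.mp hε) (δ / 2) (by linarith)
  set K := 2 * ((Finset.range M).sup n) + 2 with hK
  refine ⟨K, fun k hk => ?_⟩
  have hsup : sSup (ε '' {i | 1 ≤ i ∧ k ≤ 2 * n i + 1}) ≤ δ / 2 := by
    refine Real.sSup_le ?_ (by linarith)
    rintro x ⟨i, ⟨hi1, hi2⟩, rfl⟩
    have hiM : M ≤ i := by
      by_contra hlt
      push_neg at hlt
      have : n i ≤ (Finset.range M).sup n :=
        Finset.le_sup (Finset.mem_range.mpr hlt)
      omega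
    have := hM i hiM
    rw [Real.dist_eq, sub_zero] at this
    exact le_of_lt (lt_of_le_of_lt (le_abs_self _) this)
  have h1 : cseq n ε k ≤ δ / 2 := max_le (by linarith) hsup
  have h2 : 0 ≤ cseq n ε k := cseq_nonneg n ε k
  rw [Real.dist_eq, sub_zero, abs_of_nonneg h2]
  linarith

noncomputable def dseq (n : ℕ → ℕ) (ε : ℕ → ℝ) (m : ℕ) : ℝ :=
  cseq n ε m - cseq n ε (m + 1)

lemma dseq_nonneg (n : ℕ → ℕ) (ε : ℕ → ℝ) (hb : BddAbove (Set.range ε)) (m : ℕ) :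
    0 ≤ dseq n ε m := sub_nonneg.mpr (cseq_antitone n ε hb (Nat.le_succ m))

lemma dseq_summable (n : ℕ → ℕ) (ε : ℕ → ℝ) (hb : BddAbove (Set.range ε)) :
    Summable (dseq n ε) := by
  refine summable_of_sum_range_le (dseq_nonneg n ε hb) (fun m => ?_) (c := cseq n ε 0)
  have h := Finset.sum_range_sub' (cseq n ε) m
  have h2 : ∑ i ∈ Finset.range m, dseq n ε i = cseq n ε 0 - cseq n ε m := by
    simpa [dseq] using h
  have := cseq_nonneg n ε m
  linarith

lemma dseq_tail (n : ℕ → ℕ) (ε : ℕ → ℝ) (hb : BddAbove (Set.range ε))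
    (hε : Filter.Tendsto ε Filter.atTop (nhds 0)) (K : ℕ) :
    HasSum (fun m => dseq n ε (m + K)) (cseq n ε K) := by
  have hs : Summable (fun m => dseq n ε (m + K)) :=
    ((summable_nat_add_iff K).mpr (dseq_summable n ε hb))
  rw [hs.hasSum_iff_tendsto_nat]
  have heq : ∀ M, ∑ i ∈ Finset.range M, dseq n ε (i + K) = cseq n ε K - cseq n ε (M + K) := by
    intro M
    have := Finset.sum_range_sub' (fun i => cseq n ε (i + K)) M
    simpa [dseq, add_right_comm] using this
  simp only [heq]
  have : Filter.Tendsto (fun M => cseq n ε (M + K)) Filter.atTop (nhds 0) :=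
    (cseq_tendsto n ε hε).comp (Filter.tendsto_add_atTop_nat K)
  simpa using (tendsto_const_nhds (x := cseq n ε K)).sub this


noncomputable def hat (k : ℕ) (s : ℝ) : ℝ := max 0 (1 - 2 * |s - k|)

lemma hat_nonneg (k : ℕ) (s : ℝ) : 0 ≤ hat k s := le_max_left _ _

lemma hat_le_one (k : ℕ) (s : ℝ) : hat k s ≤ 1 := by
  refine max_le zero_le_one ?_
  have := abs_nonneg (s - (k : ℝ))
  linarith

lemma hat_self (k : ℕ) : hat k (k : ℝ) = 1 := by simp [hat]

lemma hat_eq_zero {k : ℕ} {s : ℝ} (h : (1:ℝ)/2 ≤ |s - k|) : hat k s = 0 := by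
  refine max_eq_left (by linarith)

lemma continuous_hat (k : ℕ) : Continuous (hat k) :=
  continuous_const.max (by continuity)

noncomputable def T (m : ℕ) (s : ℝ) : ℝ :=
  ∑ k ∈ Finset.range (m + 1), (-1 : ℝ) ^ k * hat k s

lemma continuous_T (m : ℕ) : Continuous (T m) :=
  continuous_finset_sum _ fun k _ => continuous_const.mul (continuous_hat k)

-- at most one hat is nonzero: the one at round s
lemma hat_eq_zero_of_ne {k : ℕ} {s : ℝ} (h : round s ≠ (k : ℤ)) : hat k s = 0 := by
  refine hat_eq_zero ?_
  have h1 : |s - round s| ≤ 1/2 := abs_sub_round s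
  have h2 : (1 : ℝ) ≤ |(round s : ℝ) - k| := by
    have : round s - (k:ℤ) ≠ 0 := sub_ne_zero.mpr h
    have : (1:ℤ) ≤ |round s - (k:ℤ)| := Int.one_le_abs this
    calc (1:ℝ) ≤ (|round s - (k:ℤ)| : ℤ) := by exact_mod_cast this
    _ = |(round s : ℝ) - k| := by push_cast; ring_nf
  calc (1:ℝ)/2 = 1 - 1/2 := by norm_num
  _ ≤ |(round s:ℝ) - k| - |s - round s| := by linarith
  _ ≤ |s - k| := by
      have := abs_sub_abs_le_abs_sub ((round s:ℝ) - k) ((round s : ℝ) - s)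
      have h3 : |(round s:ℝ) - s| = |s - round s| := abs_sub_comm _ _
      have h4 : ((round s:ℝ) - k) - ((round s:ℝ) - s) = s - k := by ring
      rw [h4] at this
      linarith [this]

lemma abs_T_le_one (m : ℕ) (s : ℝ) : |T m s| ≤ 1 := by
  by_cases hex : ∃ k ∈ Finset.range (m+1), ((k:ℤ) = round s)
  · obtain ⟨k0, hk0m, hk0⟩ := hex
    have hT : T m s = (-1:ℝ)^k0 * hat k0 s := by
      refine Finset.sum_eq_single_of_mem k0 hk0m fun k _ hne => ?_
      have hne' : round s ≠ (k:ℤ) := by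
        rw [← hk0]; exact_mod_cast fun h => hne (Nat.cast_injective h).symm
      rw [hat_eq_zero_of_ne hne', mul_zero]
    rw [hT, abs_mul, abs_pow, abs_neg, abs_one, one_pow, one_mul,
      abs_of_nonneg (hat_nonneg _ _)]
    exact hat_le_one _ _
  · have hT : T m s = 0 := by
      refine Finset.sum_eq_zero fun k hk => ?_
      have hne' : round s ≠ (k:ℤ) := fun h => hex ⟨k, hk, h.symm⟩
      rw [hat_eq_zero_of_ne hne', mul_zero]
    rw [hT, abs_zero]; exact zero_le_one


lemma T_nat (m j : ℕ) (hj : j ≤ m) : T m (j : ℝ) = (-1 : ℝ) ^ j := by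
  have : T m (j:ℝ) = (-1:ℝ)^j * hat j j := by
    refine Finset.sum_eq_single_of_mem j (Finset.mem_range.mpr (by omega)) fun k _ hne => ?_
    have hz : (j:ℤ) - k ≠ 0 := sub_ne_zero.mpr (fun h => hne (by exact_mod_cast h.symm))
    have h1 : (1:ℤ) ≤ |(j:ℤ) - k| := Int.one_le_abs hz
    have h2 : (1:ℝ) ≤ |(j:ℝ) - k| := by exact_mod_cast h1
    have : (1:ℝ)/2 ≤ |(j:ℝ) - k| := by linarith
    rw [hat_eq_zero this, mul_zero]
  rw [this, hat_self, mul_one]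

lemma T_nat_gt (m j : ℕ) (hj : m < j) : T m (j : ℝ) = 0 := by
  refine Finset.sum_eq_zero fun k hk => ?_
  have hk' : k < j := by have := Finset.mem_range.mp hk; omega
  have : (1:ℝ)/2 ≤ |(j:ℝ) - k| := by
    have h1 : (1:ℝ) ≤ (j:ℝ) - k := by
      have : (k:ℝ) + 1 ≤ j := by exact_mod_cast hk'
      linarith
    rw [abs_of_nonneg (by linarith)]; linarith
  rw [hat_eq_zero this, mul_zero]

lemma T_eq_zero_right {m : ℕ} {s : ℝ} (h : (m:ℝ) + 1/2 ≤ s) : T m s = 0 := by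
  refine Finset.sum_eq_zero fun k hk => ?_
  have hk' : k ≤ m := by have := Finset.mem_range.mp hk; omega
  have hkm : (k:ℝ) ≤ m := by exact_mod_cast hk'
  have : (1:ℝ)/2 ≤ |s - k| := by rw [abs_of_nonneg (by linarith)]; linarith
  rw [hat_eq_zero this, mul_zero]

lemma T_eq_zero_left {m : ℕ} {s : ℝ} (h : s ≤ -(1/2)) : T m s = 0 := by
  refine Finset.sum_eq_zero fun k hk => ?_
  have : (0:ℝ) ≤ k := Nat.cast_nonneg k
  have : (1:ℝ)/2 ≤ |s - k| := by rw [abs_of_nonpos (by linarith)]; linarith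
  rw [hat_eq_zero this, mul_zero]

noncomputable def G (n : ℕ → ℕ) (ε : ℕ → ℝ) (s : ℝ) : ℝ :=
  ∑' m, dseq n ε m * T m s

variable {n : ℕ → ℕ} {ε : ℕ → ℝ}

lemma norm_term_le (hb : BddAbove (Set.range ε)) (m : ℕ) (s : ℝ) :
    ‖dseq n ε m * T m s‖ ≤ dseq n ε m := by
  rw [Real.norm_eq_abs, abs_mul, abs_of_nonneg (dseq_nonneg n ε hb m)]
  calc dseq n ε m * |T m s| ≤ dseq n ε m * 1 :=
    mul_le_mul_of_nonneg_left (abs_T_le_one m s) (dseq_nonneg n ε hb m)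
  _ = dseq n ε m := mul_one _

lemma summable_term (hb : BddAbove (Set.range ε)) (s : ℝ) :
    Summable (fun m => dseq n ε m * T m s) :=
  Summable.of_norm_bounded (dseq_summable n ε hb) (fun m => norm_term_le hb m s)

lemma continuous_G (hb : BddAbove (Set.range ε)) : Continuous (G n ε) :=
  continuous_tsum (fun m => continuous_const.mul (continuous_T m))
    (dseq_summable n ε hb) (fun m s => norm_term_le hb m s)

lemma G_nat (hb : BddAbove (Set.range ε))
    (hε : Filter.Tendsto ε Filter.atTop (nhds 0)) (k : ℕ) :
    G n ε (k : ℝ) = (-1 : ℝ) ^ k * cseq n ε k := by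
  have hsum := summable_term hb (n := n) (ε := ε) (k : ℝ)
  have h1 := (hsum.sum_add_tsum_nat_add k).symm
  have h2 : ∑ i ∈ Finset.range k, dseq n ε i * T i (k:ℝ) = 0 :=
    Finset.sum_eq_zero fun i hi =>
      by rw [T_nat_gt i k (Finset.mem_range.mp hi), mul_zero]
  have h3 : ∀ i : ℕ, dseq n ε (i + k) * T (i + k) (k:ℝ) = dseq n ε (i + k) * (-1:ℝ)^k := by
    intro i; rw [T_nat (i+k) k (by omega)]
  have h4 : ∑' i, dseq n ε (i + k) * T (i + k) (k:ℝ) = (cseq n ε k) * (-1:ℝ)^k := by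
    rw [tsum_congr h3, tsum_mul_right, (dseq_tail n ε hb hε k).tsum_eq]
  rw [G, h1, h2, h4, zero_add, mul_comm]

lemma G_bound (hb : BddAbove (Set.range ε))
    (hε : Filter.Tendsto ε Filter.atTop (nhds 0)) (K : ℕ) {s : ℝ}
    (hs : (K:ℝ) - 1/2 ≤ s) : |G n ε s| ≤ cseq n ε K := by
  have hsum := summable_term hb (n := n) (ε := ε) s
  have hnorm : Summable (fun m => ‖dseq n ε m * T m s‖) :=
    (dseq_summable n ε hb).of_nonneg_of_le (fun m => norm_nonneg _)
      (fun m => norm_term_le hb m s)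
  set g : ℕ → ℝ := fun m => if m < K then 0 else dseq n ε m with hg
  have hgs : Summable g := by
    refine (dseq_summable n ε hb).of_nonneg_of_le (fun m => ?_) (fun m => ?_)
    · by_cases h : m < K <;> simp [hg, h, dseq_nonneg n ε hb m]
    · by_cases h : m < K <;> simp [hg, h, dseq_nonneg n ε hb m]
  have hle : ∀ m, ‖dseq n ε m * T m s‖ ≤ g m := by
    intro m
    by_cases h : m < K
    · have hms : (m:ℝ) + 1/2 ≤ s := by
        have : (m:ℝ) + 1 ≤ K := by exact_mod_cast h
        linarith
      simp [hg, h, T_eq_zero_right hms]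
    · simpa [hg, h] using norm_term_le hb m s
  have htsumg : ∑' m, g m = cseq n ε K := by
    have h1 := (hgs.sum_add_tsum_nat_add K).symm
    have h2 : ∑ i ∈ Finset.range K, g i = 0 :=
      Finset.sum_eq_zero fun i hi => by simp [hg, Finset.mem_range.mp hi]
    have h3 : ∀ i : ℕ, g (i + K) = dseq n ε (i + K) := fun i => by
      simp [hg, Nat.not_lt.mpr (Nat.le_add_left K i)]
    rw [h1, h2, tsum_congr h3, (dseq_tail n ε hb hε K).tsum_eq, zero_add]
  calc |G n ε s| = ‖G n ε s‖ := (Real.norm_eq_abs _).symm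
  _ ≤ ∑' m, ‖dseq n ε m * T m s‖ := norm_tsum_le_tsum_norm hnorm
  _ ≤ ∑' m, g m := Summable.tsum_le_tsum hle hnorm hgs
  _ = cseq n ε K := htsumg

lemma G_neg (hb : BddAbove (Set.range ε)) {s : ℝ} (hs : s ≤ -(1/2)) : G n ε s = 0 := by
  have : ∀ m : ℕ, dseq n ε m * T m s = 0 := fun m => by rw [T_eq_zero_left hs, mul_zero]
  simp [G, this]


end RNU

open RNU

/-- On `I = [a, b]` with `a < b`, for any sequence `(n_i)` of naturals and any
null sequence `(ε_i)`, there is a continuous `f : I → ℝ` such that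
`inf_{r ∈ 𝓡_{n_i}^1(I)} sup_{t ∈ I} |f t - r t| ≥ ε_i` for all `i ≥ 1`. -/
theorem rational_negative_uniform (a b : ℝ) (hab : a < b) (n : ℕ → ℕ)
    (ε : ℕ → ℝ) (hε : Filter.Tendsto ε Filter.atTop (nhds 0)) :
    ∃ f : ℝ → ℝ, ContinuousOn f (Set.Icc a b) ∧
      ∀ i : ℕ, 1 ≤ i → ∀ r ∈ RatFun (n i) (Set.Icc a b),
        ε i ≤ sSup ((fun t => |f t - r t|) '' Set.Icc a b) := by
  have hb : BddAbove (Set.range ε) := hε.bddAbove_range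
  have hba : (0:ℝ) < b - a := by linarith
  -- the oscillation points
  set x : ℕ → ℝ := fun k => b - (b - a) / (k + 1) with hx
  have hkpos : ∀ k : ℕ, (0:ℝ) < (k:ℝ) + 1 := fun k => by positivity
  have hx_lt_b : ∀ k, x k < b := fun k => by
    have : (0:ℝ) < (b - a) / (k + 1) := div_pos hba (hkpos k)
    simp only [hx]; linarith
  have ha_le_x : ∀ k, a ≤ x k := fun k => by
    have h1 : (b - a) / ((k:ℝ) + 1) ≤ b - a := by
      apply div_le_self (le_of_lt hba)
      have : (0:ℝ) ≤ (k:ℝ) := Nat.cast_nonneg k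
      linarith
    simp only [hx]; linarith
  have hx_mem : ∀ k, x k ∈ Set.Icc a b := fun k => ⟨ha_le_x k, le_of_lt (hx_lt_b k)⟩
  have hx_mono : StrictMono x := by
    intro k l hkl
    have hkl' : (k:ℝ) + 1 < (l:ℝ) + 1 := by exact_mod_cast Nat.succ_lt_succ hkl
    have : (b - a) / ((l:ℝ) + 1) < (b - a) / ((k:ℝ) + 1) :=
      div_lt_div_of_pos_left hba (hkpos k) hkl'
    simp only [hx]; linarith
  -- the function
  set ψ : ℝ → ℝ := fun t => (b - a) / (b - t) - 1 with hψ
  set f : ℝ → ℝ := fun t => G n ε (ψ t) with hf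
  have hψx : ∀ k : ℕ, ψ (x k) = (k : ℝ) := by
    intro k
    have h1 : b - x k = (b - a) / (k + 1) := by simp only [hx]; ring
    have h2 : (b - a) / ((b - a) / ((k:ℝ) + 1)) = (k:ℝ) + 1 := by
      rw [div_div_eq_mul_div, mul_comm, mul_div_assoc, div_self (ne_of_gt hba), mul_one]
    simp only [hψ, h1, h2]
    ring
  have hfx : ∀ k : ℕ, f (x k) = (-1:ℝ)^k * cseq n ε k := by
    intro k; simp only [hf]; rw [hψx k, G_nat hb hε k]
  have hfb : f b = 0 := by
    have : ψ b = -1 := by simp [hψ]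
    simp only [hf, this]
    exact G_neg hb (by norm_num)
  -- continuity
  have hcwb : ContinuousWithinAt f (Set.Icc a b) b := by
      rw [Metric.continuousWithinAt_iff]
      intro δ hδ
      obtain ⟨K, hK⟩ := (Metric.tendsto_atTop.mp (cseq_tendsto n ε hε)) δ hδ
      have hcK : cseq n ε K < δ := by
        have := hK K le_rfl
        rwa [Real.dist_eq, sub_zero, abs_of_nonneg (cseq_nonneg n ε K)] at this
      refine ⟨(b - a) / ((K:ℝ) + 1), div_pos hba (hkpos K), fun {u} hu hdist => ?_⟩
      rcases eq_or_lt_of_le hu.2 with heq | hub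
      · rw [heq, dist_self]; exact hδ
      · have hbu : 0 < b - u := by linarith
        have hdist' : b - u < (b - a) / ((K:ℝ) + 1) := by
          rw [Real.dist_eq] at hdist
          have := le_abs_self (u - b)
          have := abs_sub_comm u b
          calc b - u ≤ |b - u| := le_abs_self _
          _ = |u - b| := (abs_sub_comm b u)
          _ < _ := hdist
        have hψu : (K:ℝ) - 1/2 ≤ ψ u := by
          have h1 : (K:ℝ) + 1 ≤ (b - a) / (b - u) := by
            rw [le_div_iff₀ hbu]
            calc ((K:ℝ) + 1) * (b - u) ≤ ((K:ℝ) + 1) * ((b-a)/((K:ℝ)+1)) :=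
              mul_le_mul_of_nonneg_left (le_of_lt hdist') (le_of_lt (hkpos K))
            _ = b - a := by field_simp
          simp only [hψ]; linarith
        have hGb := G_bound (n := n) hb hε K hψu
        rw [Real.dist_eq, hfb, sub_zero]
        calc |f u| = |G n ε (ψ u)| := rfl
        _ ≤ cseq n ε K := hGb
        _ < δ := hcK
  have hf_cont : ContinuousOn f (Set.Icc a b) := by
    intro t ht
    rcases eq_or_lt_of_le ht.2 with heq | htb
    · exact heq ▸ hcwb
    · have hψc : ContinuousAt ψ t := by
        have hne : b - t ≠ 0 := by intro h; linarith
        simp only [hψ]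
        exact ((continuousAt_const).div (by fun_prop) hne).sub continuousAt_const
      exact (((continuous_G hb).continuousAt).comp hψc).continuousWithinAt
  refine ⟨f, hf_cont, ?_⟩
  rintro i hi r ⟨p, q, hp, hq, hq0, hr⟩
  set N := n i with hN
  -- bddAbove of the image
  set S := (fun t => |f t - r t|) '' Set.Icc a b with hS
  have himg : S = (fun t => |f t - p.eval t / q.eval t|) '' Set.Icc a b := by
    refine Set.image_congr fun t ht => by rw [hr t ht]
  have hgc : ContinuousOn (fun t => |f t - p.eval t / q.eval t|) (Set.Icc a b) := by
    refine (hf_cont.sub (ContinuousOn.div ?_ ?_ hq0)).abs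
    · exact (Polynomial.continuous p).continuousOn
    · exact (Polynomial.continuous q).continuousOn
  have hbdd : BddAbove S := by
    rw [himg]
    exact (isCompact_Icc.image_of_continuousOn hgc).bddAbove
  have key : ∃ t ∈ Set.Icc a b, ε i ≤ |f t - r t| := by
    rcases le_or_gt (ε i) 0 with hεi | hεi
    · exact ⟨a, Set.left_mem_Icc.mpr (le_of_lt hab), le_trans hεi (abs_nonneg _)⟩
    by_contra hcon
    push_neg at hcon
    -- sign alternation of h = p*q at points x k
    set P := p * q with hP
    have hsign : ∀ k ≤ 2*N+1, 0 < (-1:ℝ)^k * P.eval (x k) := by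
      intro k hk
      have hck : ε i ≤ cseq n ε k := cseq_ge n ε hb hi hk
      have habs := hcon (x k) (hx_mem k)
      have hfxk := hfx k
      have hone : ((-1:ℝ)^k) * ((-1:ℝ)^k) = 1 := by
        rw [← pow_add]; exact Even.neg_one_pow ⟨k, by ring⟩
      have hrk : 0 < (-1:ℝ)^k * r (x k) := by
        have h1 : (-1:ℝ)^k * f (x k) = cseq n ε k := by rw [hfxk, ← mul_assoc, hone, one_mul]
        have h2 : (-1:ℝ)^k * (f (x k) - r (x k)) ≤ |f (x k) - r (x k)| := by
          calc (-1:ℝ)^k * (f (x k) - r (x k)) ≤ |(-1:ℝ)^k * (f (x k) - r (x k))| :=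
            le_abs_self _
          _ = |f (x k) - r (x k)| := by
            rw [abs_mul, abs_pow, abs_neg, abs_one, one_pow, one_mul]
        have h3 : (-1:ℝ)^k * r (x k) = cseq n ε k - (-1:ℝ)^k * (f (x k) - r (x k)) := by
          rw [mul_sub] at h2 ⊢; linarith [h1]
        rw [h3]
        calc (0:ℝ) < cseq n ε k - |f (x k) - r (x k)| := by linarith
        _ ≤ _ := by linarith
      have hq' : q.eval (x k) ≠ 0 := hq0 (x k) (hx_mem k)
      have hrpq : r (x k) = p.eval (x k) / q.eval (x k) := hr (x k) (hx_mem k)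
      have : (-1:ℝ)^k * P.eval (x k) = ((-1:ℝ)^k * r (x k)) * (q.eval (x k))^2 := by
        rw [hrpq, hP, Polynomial.eval_mul]
        field_simp
      rw [this]
      exact mul_pos hrk (by positivity)
    have hPne : P ≠ 0 := by
      intro h0
      have h1 := hsign 0 (by omega)
      rw [h0] at h1; simp at h1
    have hroots : ∀ k : Fin (2*N+1), ∃ y ∈ Set.Ioo (x k.val) (x (k.val+1)), P.eval y = 0 := by
      rintro ⟨k, hk⟩
      simp only
      have h1 := hsign k (by omega)
      have h2 := hsign (k+1) (by omega)
      have hxk : x k ≤ x (k+1) := le_of_lt (hx_mono (Nat.lt_succ_self k))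
      have hc : ContinuousOn (fun t => P.eval t) (Set.Icc (x k) (x (k+1))) :=
        (Polynomial.continuous P).continuousOn
      rcases Nat.even_or_odd k with he | ho
      · have e1 : ((-1:ℝ))^k = 1 := he.neg_one_pow
        have e2 : ((-1:ℝ))^(k+1) = -1 := by rw [pow_succ, e1, one_mul]
        rw [e1, one_mul] at h1
        rw [e2] at h2
        have hmem : (0:ℝ) ∈ Set.Ioo (P.eval (x (k+1))) (P.eval (x k)) :=
          ⟨by linarith, h1⟩
        obtain ⟨y, hy, hy0⟩ := intermediate_value_Ioo' hxk hc hmem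
        exact ⟨y, hy, hy0⟩
      · have e1 : ((-1:ℝ))^k = -1 := ho.neg_one_pow
        have e2 : ((-1:ℝ))^(k+1) = 1 := by rw [pow_succ, e1]; ring
        rw [e1] at h1
        rw [e2, one_mul] at h2
        have hmem : (0:ℝ) ∈ Set.Ioo (P.eval (x k)) (P.eval (x (k+1))) :=
          ⟨by linarith, h2⟩
        obtain ⟨y, hy, hy0⟩ := intermediate_value_Ioo hxk hc hmem
        exact ⟨y, hy, hy0⟩
    choose y hy hy0 using hroots
    have hymono : StrictMono y := by
      intro k l hkl
      have h1 : y k < x (k.val + 1) := (hy k).2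
      have h2 : x (k.val + 1) ≤ x l.val := hx_mono.monotone (Fin.lt_def.mp hkl)
      have h3 : x l.val < y l := (hy l).1
      linarith
    have hcard : (Finset.image y Finset.univ).card = 2*N+1 := by
      rw [Finset.card_image_of_injective _ hymono.injective, Finset.card_univ,
        Fintype.card_fin]
    have hsub : Finset.image y Finset.univ ⊆ P.roots.toFinset := by
      intro z hz
      obtain ⟨k, _, rfl⟩ := Finset.mem_image.mp hz
      rw [Multiset.mem_toFinset, Polynomial.mem_roots']
      exact ⟨hPne, hy0 k⟩
    have hpne : p ≠ 0 := fun h => hPne (by rw [hP, h, zero_mul])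
    have hqne : q ≠ 0 := fun h => hPne (by rw [hP, h, mul_zero])
    have hdeg : P.natDegree ≤ 2*N := by
      rw [hP, Polynomial.natDegree_mul hpne hqne]; omega
    have hc1 := Finset.card_le_card hsub
    have hc2 := Multiset.toFinset_card_le P.roots
    have hc3 := P.card_roots'
    omega
  obtain ⟨t₀, ht₀, hle⟩ := key
  exact le_trans hle (le_csSup hbdd ⟨t₀, ht₀, rfl⟩)
end

section
/- Let I = [a, b] with a < b, let q ∈ (0, ∞), let (n_i)_{i≥1} be an arbitrary sequence of natural numbers, and let (ε_i)_{i≥1} be a sequence of real numbers with ε_i → 0. Then there exists a function f ∈ L^q(I) such that for every i ≥ 1, inf_{r ∈ 𝓡_{n_i}^1(I)} (∫_I |f(t) − r(t)|^q dt)^{1/q} ≥ ε_i. -/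
open MeasureTheory

open Set
open scoped ENNReal NNReal Classical

open scoped Classical in
lemma count_cheap_pairs {A B : ℝ} {d : ℕ} {p qp : Polynomial ℝ}
    (hpd : p.natDegree ≤ d) (hp : p ≠ 0)
    (hq : ∀ t ∈ Icc A B, qp.eval t ≠ 0)
    (o ℓ : ℝ) (hℓ : 0 < ℓ) (M₀ M : ℕ)
    (cheap : ℕ → Prop)
    (hcheap : ∀ g, 2*M₀ ≤ g → g < 2*M → cheap g →
      ∃ x, (x ∈ Ico (o + g*ℓ) (o + (g+1)*ℓ) ∩ Icc A B) ∧
        (if Even g then 0 < p.eval x / qp.eval x else p.eval x / qp.eval x < 0)) :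
    ((Finset.Ico M₀ M).filter (fun m => cheap (2*m) ∧ cheap (2*m+1))).card ≤ d := by
  classical
  set S := (Finset.Ico M₀ M).filter (fun m => cheap (2*m) ∧ cheap (2*m+1)) with hS
  have key : ∀ m : ℕ, ∃ z : ℝ, m ∈ S →
      z ∈ Ioo (o + (2*m)*ℓ) (o + (2*m+2)*ℓ) ∧ p.eval z = 0 := by
    intro m
    by_cases hm : m ∈ S
    · simp only [hS, Finset.mem_filter, Finset.mem_Ico] at hm
      obtain ⟨⟨hm1, hm2⟩, hc1, hc2⟩ := hm
      obtain ⟨x₁, ⟨hx₁, hx₁I⟩, hs₁⟩ := hcheap (2*m) (by omega) (by omega) hc1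
      obtain ⟨x₂, ⟨hx₂, hx₂I⟩, hs₂⟩ := hcheap (2*m+1) (by omega) (by omega) hc2
      rw [if_pos (even_two_mul m)] at hs₁
      rw [if_neg (by simp [Nat.even_add_one])] at hs₂
      obtain ⟨hx₁l, hx₁r⟩ := hx₁
      obtain ⟨hx₂l, hx₂r⟩ := hx₂
      push_cast at hx₁l hx₁r hx₂l hx₂r
      have hx12 : x₁ < x₂ := by linarith
      have hsubI : Icc x₁ x₂ ⊆ Icc A B := Icc_subset_Icc hx₁I.1 hx₂I.2
      have hcont : ContinuousOn (fun t => p.eval t / qp.eval t) (Icc x₁ x₂) := by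
        apply ContinuousOn.div (p.continuous_aeval.continuousOn)
          (qp.continuous_aeval.continuousOn)
        exact fun t ht => hq t (hsubI ht)
      have h0 : (0:ℝ) ∈ Ioo (p.eval x₂ / qp.eval x₂) (p.eval x₁ / qp.eval x₁) := ⟨hs₂, hs₁⟩
      obtain ⟨z, hz, hz0⟩ := intermediate_value_Ioo' (le_of_lt hx12) hcont h0
      refine ⟨z, fun _ => ⟨⟨?_, ?_⟩, ?_⟩⟩
      · push_cast; linarith [hz.1]
      · push_cast; linarith [hz.2]
      · have : p.eval z = 0 ∨ qp.eval z = 0 := div_eq_zero_iff.mp hz0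
        have hqz : qp.eval z ≠ 0 := hq z (hsubI ⟨le_of_lt hz.1, le_of_lt hz.2⟩)
        tauto
    · exact ⟨0, fun h => absurd h hm⟩
  choose z hz using key
  have hmono : ∀ m ∈ S, ∀ m' ∈ S, m < m' → z m < z m' := by
    intro m hm m' hm' hlt
    have h1 := (hz m hm).1
    have h2 := (hz m' hm').1
    have hle : ((2:ℝ)*m+2) ≤ 2*m' := by
      have : (m:ℝ) + 1 ≤ m' := by exact_mod_cast hlt
      linarith
    calc z m < o + (2*m+2)*ℓ := h1.2
      _ ≤ o + (2*m')*ℓ := by nlinarith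
      _ < z m' := h2.1
  have hinj : Set.InjOn z S := by
    intro m hm m' hm' hzz
    rcases lt_trichotomy m m' with h | h | h
    · exact absurd hzz (ne_of_lt (hmono m hm m' hm' h))
    · exact h
    · exact absurd hzz.symm (ne_of_lt (hmono m' hm' m hm h))
  have hmem : ∀ m ∈ S, z m ∈ p.roots.toFinset := by
    intro m hm
    rw [Multiset.mem_toFinset, Polynomial.mem_roots hp]
    exact (hz m hm).2
  calc S.card ≤ p.roots.toFinset.card := Finset.card_le_card_of_injOn z hmem hinj
    _ ≤ Multiset.card p.roots := p.roots.toFinset_card_le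
    _ ≤ p.natDegree := p.card_roots'
    _ ≤ d := hpd

open scoped Classical in
lemma block_bound {A B : ℝ} (q : ℝ) (hq : 0 < q) (d K : ℕ) (hd : 2*d ≤ K)
    (ℓ : ℝ) (hℓ : 0 < ℓ) (amp : ℝ) (hamp : 0 < amp)
    (hsub : Ico (A + (2*K)*ℓ) (A + (4*K)*ℓ) ⊆ Icc A B)
    (f : ℝ → ℝ)
    (hf : ∀ g : ℕ, 2*K ≤ g → g < 4*K → ∀ x ∈ Ico (A + (g:ℝ)*ℓ) (A + ((g:ℝ)+1)*ℓ),
          f x = if Even g then amp else -amp)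
    (r : ℝ → ℝ) (hr : r ∈ RatFun d (Icc A B)) :
    ENNReal.ofReal ((amp/2)^q * ((K:ℝ)/2 * ℓ)) ≤
      ∫⁻ x in Icc A B, (‖f x - r x‖₊ : ℝ≥0∞) ^ q ∂volume := by
  classical
  obtain ⟨p, qp, hpd, hqd, hqne, hrpq⟩ := hr
  -- cell g as a set
  set cell : ℕ → Set ℝ := fun g => Ico (A + (g:ℝ)*ℓ) (A + ((g:ℝ)+1)*ℓ) with hcell
  have hcell_sub : ∀ g, 2*K ≤ g → g < 4*K → cell g ⊆ Icc A B := by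
    intro g hg1 hg2
    refine subset_trans ?_ hsub
    have e1 : (2*(K:ℝ)) ≤ g := by exact_mod_cast hg1
    have e2 : (g:ℝ)+1 ≤ 4*K := by exact_mod_cast hg2
    intro x hx
    exact ⟨by nlinarith [hx.1], by nlinarith [hx.2]⟩
  -- cheapness
  set cheap : ℕ → Prop := fun g => ∃ x ∈ cell g, |f x - r x| < amp/2 with hcheapdef
  -- non-cheap cells are entirely in the bad set
  have hexp : ∀ g, 2*K ≤ g → g < 4*K → ¬ cheap g →
      ∀ x ∈ cell g, amp/2 ≤ |f x - r x| := by
    intro g h1 h2 hnc x hx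
    by_contra h
    exact hnc ⟨x, hx, by linarith⟩
  -- the set of both-cheap pairs has card ≤ d, provided p ≠ 0
  set S := (Finset.Ico K (2*K)).filter (fun m => cheap (2*m) ∧ cheap (2*m+1)) with hSdef
  -- bad pairs
  set T := (Finset.Ico K (2*K)) \ S with hTdef
  -- choose a fully-expensive cell for each bad pair
  have hbadcell : ∀ m, ∃ g, m ∈ T → (2*m ≤ g ∧ g ≤ 2*m+1 ∧ ¬ cheap g) := by
    intro m
    by_cases hm : m ∈ T
    · rw [hTdef, Finset.mem_sdiff, hSdef, Finset.mem_filter] at hm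
      have : ¬ (cheap (2*m) ∧ cheap (2*m+1)) := fun hc => hm.2 ⟨hm.1, hc⟩
      by_cases h1 : cheap (2*m)
      · exact ⟨2*m+1, fun _ => ⟨by omega, le_refl _, fun h2 => this ⟨h1, h2⟩⟩⟩
      · exact ⟨2*m, fun _ => ⟨le_refl _, by omega, h1⟩⟩
    · exact ⟨0, fun h => absurd h hm⟩
  choose c hc using hbadcell
  -- the union of the chosen cells
  set U : Set ℝ := ⋃ m ∈ T, cell (c m) with hUdef
  have hcrange : ∀ m ∈ T, 2*K ≤ c m ∧ c m < 4*K := by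
    intro m hm
    have h := hc m hm
    have hmm : K ≤ m ∧ m < 2*K := by
      have := Finset.mem_sdiff.mp hm
      simpa [Finset.mem_Ico] using (Finset.mem_sdiff.mp hm).1
    omega
  have hUsub : U ⊆ Icc A B := by
    rw [hUdef]
    refine iUnion₂_subset ?_
    intro m hm
    exact hcell_sub _ (hcrange m hm).1 (hcrange m hm).2
  have hUmeas : MeasurableSet U := by
    rw [hUdef]
    exact MeasurableSet.biUnion T.countable_toSet (fun m _ => measurableSet_Ico)
  -- lower bound on each chosen cell
  have hUbound : ∀ x ∈ U, amp/2 ≤ |f x - r x| := by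
    intro x hx
    rw [hUdef] at hx
    simp only [mem_iUnion] at hx
    obtain ⟨m, hm, hxc⟩ := hx
    exact hexp (c m) (hcrange m hm).1 (hcrange m hm).2 (hc m hm).2.2 x hxc
  -- volume of U
  have hdisj : (↑T : Set ℕ).PairwiseDisjoint (fun m => cell (c m)) := by
    intro m hm m' hm' hne
    have h1 := hc m hm
    have h2 := hc m' hm'
    have : c m ≠ c m' := by omega
    rcases this.lt_or_gt with hlt | hlt
    · apply Set.disjoint_left.mpr
      intro x hx hx'
      have : A + ((c m':ℝ))*ℓ ≤ x := hx'.1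
      have hxlt : x < A + ((c m:ℝ)+1)*ℓ := hx.2
      have : ((c m:ℝ))+1 ≤ (c m' : ℝ) := by exact_mod_cast hlt
      nlinarith
    · apply Set.disjoint_right.mpr
      intro x hx hx'
      have : A + ((c m:ℝ))*ℓ ≤ x := hx'.1
      have hxlt : x < A + ((c m':ℝ)+1)*ℓ := hx.2
      have : ((c m':ℝ))+1 ≤ (c m : ℝ) := by exact_mod_cast hlt
      nlinarith
  have hvolcell : ∀ m, volume (cell (c m)) = ENNReal.ofReal ℓ := by
    intro m
    rw [hcell]
    simp [Real.volume_Ico]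
    ring_nf
  have hvolU : volume U = T.card * ENNReal.ofReal ℓ := by
    rw [hUdef, measure_biUnion_finset hdisj (fun m _ => measurableSet_Ico)]
    simp [hvolcell]
  -- card of T
  have hcardT : ((K:ℝ)/2) ≤ (T.card : ℝ) := by
    have hcardS : S.card ≤ d := by
      by_cases hp : p = 0
      · -- r = 0 on Icc A B, so nothing is cheap: S is empty
        have : S = ∅ := by
          rw [hSdef, Finset.filter_eq_empty_iff]
          intro m hm
          rw [Finset.mem_Ico] at hm
          rintro ⟨⟨x, hx, hlt⟩, -⟩
          have hxI : x ∈ Icc A B := hcell_sub (2*m) (by omega) (by omega) hx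
          have : r x = 0 := by rw [hrpq x hxI, hp]; simp
          rw [this, sub_zero] at hlt
          have := hf (2*m) (by omega) (by omega) x hx
          rw [if_pos (even_two_mul m)] at this
          rw [this] at hlt
          rw [abs_of_pos hamp] at hlt
          linarith
        simp [this]
      · refine count_cheap_pairs hpd hp hqne A ℓ hℓ K (2*K) cheap ?_
        intro g hg1 hg2' hcg
        have hg2 : g < 4*K := by omega
        obtain ⟨x, hx, hlt⟩ := hcg
        have hxI : x ∈ Icc A B := hcell_sub g hg1 hg2 hx
        refine ⟨x, ⟨hx, hxI⟩, ?_⟩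
        have hfx := hf g hg1 hg2 x hx
        have hrx : r x = p.eval x / qp.eval x := hrpq x hxI
        by_cases hev : Even g
        · rw [if_pos hev]
          rw [if_pos hev] at hfx
          rw [← hrx]
          rw [hfx] at hlt
          have := abs_lt.mp hlt
          linarith [this.1, this.2]
        · rw [if_neg hev]
          rw [if_neg hev] at hfx
          rw [← hrx]
          rw [hfx] at hlt
          have := abs_lt.mp hlt
          linarith [this.1, this.2]
    have h0 : T.card + S.card = K := by
      rw [hTdef, Finset.card_sdiff_of_subset (by rw [hSdef]; exact Finset.filter_subset _ _)]
      have hle : S.card ≤ (Finset.Ico K (2*K)).card :=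
        Finset.card_le_card (by rw [hSdef]; exact Finset.filter_subset _ _)
      rw [Nat.card_Ico] at hle ⊢
      omega
    have h1 : K ≤ 2 * T.card := by omega
    have h2 : (K:ℝ) ≤ 2 * T.card := by exact_mod_cast h1
    linarith
  -- conclude
  calc ENNReal.ofReal ((amp/2)^q * ((K:ℝ)/2 * ℓ))
      ≤ ENNReal.ofReal ((amp/2)^q) * (T.card * ENNReal.ofReal ℓ) := by
        rw [ENNReal.ofReal_mul (by positivity), ENNReal.ofReal_mul (by positivity)]
        refine mul_le_mul_right (mul_le_mul_left ?_ _) _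
        calc ENNReal.ofReal ((K:ℝ)/2) ≤ ENNReal.ofReal ((T.card:ℕ):ℝ) :=
              ENNReal.ofReal_le_ofReal hcardT
          _ = ((T.card:ℕ) : ℝ≥0∞) := ENNReal.ofReal_natCast _
    _ = ENNReal.ofReal ((amp/2)^q) * volume U := by rw [hvolU]
    _ ≤ ∫⁻ x in U, (‖f x - r x‖₊ : ℝ≥0∞) ^ q ∂volume := by
        rw [← setLIntegral_const U (ENNReal.ofReal ((amp/2)^q))]
        refine setLIntegral_mono' hUmeas ?_
        intro x hx
        rw [← enorm_eq_nnnorm, Real.enorm_eq_ofReal_abs,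
          ENNReal.ofReal_rpow_of_pos (lt_of_lt_of_le (by positivity) (hUbound x hx))]
        exact ENNReal.ofReal_le_ofReal
          (Real.rpow_le_rpow (by positivity) (hUbound x hx) hq.le)
    _ ≤ ∫⁻ x in Icc A B, (‖f x - r x‖₊ : ℝ≥0∞) ^ q ∂volume := by
        exact lintegral_mono_set hUsub

set_option maxHeartbeats 1000000 in
/-- On `I = [a, b]` with `a < b`, for `q ∈ (0, ∞)`, any sequence `(n_i)` of
naturals and any null sequence `(ε_i)`, there is `f ∈ L^q(I)` such that
`inf_{r ∈ 𝓡_{n_i}^1(I)} ‖f - r‖_{L^q(I)} ≥ ε_i` for all `i ≥ 1`. -/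
theorem rational_negative_Lq (a b : ℝ) (hab : a < b) (q : ℝ) (hq : 0 < q) (n : ℕ → ℕ)
    (ε : ℕ → ℝ) (hε : Filter.Tendsto ε Filter.atTop (nhds 0)) :
    ∃ f : ℝ → ℝ, MemLp f (ENNReal.ofReal q) (volume.restrict (Set.Icc a b)) ∧
      ∀ i : ℕ, 1 ≤ i → ∀ r ∈ RatFun (n i) (Set.Icc a b),
        ENNReal.ofReal (ε i)
          ≤ eLpNorm (f - r) (ENNReal.ofReal q) (volume.restrict (Set.Icc a b)) := by
  classical
  set L := b - a with hLdef
  have hL : 0 < L := by simp only [hLdef]; linarith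
  -- upper bound for ε
  obtain ⟨C, hC⟩ := hε.bddAbove_range
  rw [mem_upperBounds] at hC
  set K := max C 1 with hKdef
  have hK1 : (1:ℝ) ≤ K := le_max_right _ _
  have hKε : ∀ i, ε i ≤ K := fun i => le_trans (hC _ ⟨i, rfl⟩) (le_max_left _ _)
  -- thresholds
  have hIex : ∀ j : ℕ, ∃ N : ℕ, ∀ i, N ≤ i → |ε i| < (1/2)^j := by
    intro j
    obtain ⟨N, hN⟩ := Metric.tendsto_atTop.mp hε ((1/2)^j) (by positivity)
    exact ⟨N, fun i hi => by simpa [Real.dist_eq] using hN i hi⟩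
  choose I hI using hIex
  set D : ℕ → ℕ := fun j => (Finset.range (I j)).sup n with hDdef
  have hD : ∀ j i, D j < n i → ε i ≤ (1/2)^j := by
    intro j i hni
    have hiI : I j ≤ i := by
      by_contra h
      push_neg at h
      have : n i ≤ D j := Finset.le_sup (Finset.mem_range.mpr h)
      omega
    have h2 := abs_lt.mp (hI j i hiI)
    linarith [h2.2]
  set Dm : ℕ → ℕ := fun j => j + (Finset.range (j+1)).sup D with hDmdef
  have hDmj : ∀ j, j ≤ Dm j := fun j => Nat.le_add_right _ _
  have hDDm : ∀ j, D j ≤ Dm j := fun j =>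
    le_trans (Finset.le_sup (Finset.mem_range.mpr (Nat.lt_succ_self j))) (Nat.le_add_left _ _)
  -- block geometry
  set Kc : ℕ → ℕ := fun j => 2 * Dm j + 4 with hKcdef
  have hKcpos : ∀ j, 0 < (Kc j : ℝ) := fun j => by positivity
  set τ : ℕ → ℝ := fun j => 2 * K * (1/2)^j with hτdef
  have hτpos : ∀ j, 0 < τ j := fun j => by
    have : (0:ℝ) < K := lt_of_lt_of_le one_pos hK1
    positivity
  set X : ℕ → ℝ := fun j => L * (1/2)^(j+1) with hXdef
  have hXpos : ∀ j, 0 < X j := fun j => by positivity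
  set ℓf : ℕ → ℝ := fun j => X j / (2 * Kc j) with hℓdef
  have hℓpos : ∀ j, 0 < ℓf j := fun j => div_pos (hXpos j) (by have := hKcpos j; positivity)
  set amp : ℕ → ℝ := fun j => 2 * τ j * (4 / X j) ^ (1/q) with hampdef
  have hamppos : ∀ j, 0 < amp j := fun j => by
    have h1 := hτpos j
    have h2 := hXpos j
    have : (0:ℝ) < (4 / X j) ^ (1/q) := Real.rpow_pos_of_pos (by positivity) _
    positivity
  have h2Kℓ : ∀ j, (2*(Kc j):ℝ) * ℓf j = X j := by
    intro j
    have : (2*(Kc j):ℝ) ≠ 0 := by have := hKcpos j; positivity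
    simp only [hℓdef]
    have hKc0 : (Kc j:ℝ) ≠ 0 := (hKcpos j).ne'
    field_simp
  have h4Kℓ : ∀ j, (4*(Kc j):ℝ) * ℓf j = 2 * X j := by
    intro j
    have h := h2Kℓ j
    ring_nf
    ring_nf at h
    linarith
  -- the detection quantity
  have hdetect : ∀ j, (amp j / 2)^q * ((Kc j:ℝ)/2 * ℓf j) = τ j ^ q := by
    intro j
    have hX := hXpos j
    have hKcj := hKcpos j
    have hW : ((4 / X j) ^ (1/q) : ℝ) ^ q = 4 / X j := by
      rw [← Real.rpow_mul (by positivity), one_div, inv_mul_cancel₀ hq.ne', Real.rpow_one]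
    have hsplit : (amp j / 2)^q = τ j ^ q * (4 / X j) := by
      have : amp j / 2 = τ j * (4 / X j) ^ (1/q) := by rw [hampdef]; ring
      rw [this, Real.mul_rpow (hτpos j).le (Real.rpow_nonneg (by positivity) _), hW]
    have hcell : ((Kc j:ℝ)/2) * ℓf j = X j / 4 := by
      rw [hℓdef]
      field_simp
      ring
    rw [hsplit, hcell]
    field_simp
  -- blocks
  set Bk : ℕ → Set ℝ := fun j => Ico (a + X j) (a + 2 * X j) with hBdef
  have hBsub : ∀ j, Bk j ⊆ Icc a b := by
    intro j x hx
    have h1 : 0 < X j := hXpos j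
    have h2 : 2 * X j ≤ L := by
      rw [hXdef]
      have : (1/2:ℝ)^(j+1) ≤ (1/2)^1 := by
        apply pow_le_pow_of_le_one (by norm_num) (by norm_num)
        omega
      simp only [pow_one] at this
      nlinarith
    constructor
    · linarith [hx.1]
    · have := hx.2
      simp only [hLdef] at h2
      linarith
  have hBdisj : ∀ j j', j < j' → ∀ x, x ∈ Bk j' → x ∉ Bk j := by
    intro j j' hlt x hx' hx
    have h1 : x < a + 2 * X j' := hx'.2
    have h2 : a + X j ≤ x := hx.1
    have : 2 * X j' ≤ X j := by
      rw [hXdef]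
      have : (1/2:ℝ)^(j'+1) ≤ (1/2)^(j+2) := by
        apply pow_le_pow_of_le_one (by norm_num) (by norm_num)
        omega
      have h3 : (2:ℝ) * ((1/2)^(j+2)) = (1/2)^(j+1) := by ring
      nlinarith
    linarith
  have hBne : ∀ j j', j ≠ j' → ∀ x, x ∈ Bk j' → x ∉ Bk j := by
    intro j j' hne x hx' hx
    rcases Nat.lt_or_ge j j' with h | h
    · exact hBdisj j j' h x hx' hx
    · have : j' < j := by omega
      exact hBdisj j' j this x hx hx'
  set sgn : ℕ → ℝ → ℝ := fun j x => if Even ⌊(x - a)/ℓf j⌋ then amp j else -amp j with hsgndef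
  set gj : ℕ → ℝ → ℝ := fun j => (Bk j).indicator (sgn j) with hgdef
  set f : ℝ → ℝ := fun x => ∑' j, gj j x with hfdef
  have hgval0 : ∀ j x, x ∉ Bk j → gj j x = 0 := by
    intro j x hx; exact indicator_of_notMem hx _
  have hfval : ∀ j x, x ∈ Bk j → f x = sgn j x := by
    intro j x hx
    show (∑' j', gj j' x) = sgn j x
    rw [tsum_eq_single j (fun j' hne => hgval0 j' x (hBne j' j hne x hx))]
    exact indicator_of_mem hx _
  have hfval0 : ∀ x, (∀ j, x ∉ Bk j) → f x = 0 := by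
    intro x hx
    show (∑' j, gj j x) = 0
    have : ∀ j, gj j x = 0 := fun j => hgval0 j x (hx j)
    simp [this]
  have hfabs : ∀ j x, x ∈ Bk j → |f x| = amp j := by
    intro j x hx
    rw [hfval j x hx]
    simp only [hsgndef]
    by_cases h : Even ⌊(x - a)/ℓf j⌋
    · rw [if_pos h, abs_of_pos (hamppos j)]
    · rw [if_neg h, abs_neg, abs_of_pos (hamppos j)]
  -- measurability
  have hsgnmeas : ∀ j, Measurable (sgn j) := by
    intro j
    have h1 : Measurable (fun x : ℝ => ⌊(x - a)/ℓf j⌋) :=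
      Int.measurable_floor.comp ((measurable_id.sub_const a).div_const (ℓf j))
    have h2 : Measurable (fun k : ℤ => if Even k then amp j else -amp j) :=
      measurable_from_top
    exact h2.comp h1
  have hgmeas : ∀ j, Measurable (gj j) := fun j =>
    (hsgnmeas j).indicator measurableSet_Ico
  have hhassum : ∀ x, HasSum (fun j => gj j x) (f x) := by
    intro x
    by_cases hx : ∃ j, x ∈ Bk j
    · obtain ⟨j₀, hj₀⟩ := hx
      have h := hasSum_single (f := fun j => gj j x) j₀
        (fun j' hne => hgval0 j' x (hBne j' j₀ hne x hj₀))
      have : f x = gj j₀ x := by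
        rw [hfval j₀ x hj₀, hgdef]
        exact (indicator_of_mem hj₀ _).symm
      rwa [this]
    · push_neg at hx
      have h0 : f x = 0 := hfval0 x hx
      rw [h0]
      have : (fun j => gj j x) = fun _ => 0 := funext fun j => hgval0 j x (hx j)
      rw [this]
      exact hasSum_zero
  have hfmeas : Measurable f := by
    apply measurable_of_tendsto_metrizable
      (f := fun N => fun x => ∑ j ∈ Finset.range N, gj j x)
    · intro N
      exact Finset.measurable_sum _ (fun j _ => hgmeas j)
    · rw [tendsto_pi_nhds]
      intro x
      exact (hhassum x).tendsto_sum_nat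
  -- f on cells
  have hfcell : ∀ j (g : ℕ), 2*(Kc j) ≤ g → g < 4*(Kc j) →
      ∀ x ∈ Ico (a + (g:ℝ)*ℓf j) (a + ((g:ℝ)+1)*ℓf j),
      f x = if Even g then amp j else -amp j := by
    intro j g hg1 hg2 x hx
    have hℓj := hℓpos j
    have hc1 : (2*(Kc j):ℝ) ≤ g := by exact_mod_cast hg1
    have hc2 : (g:ℝ) + 1 ≤ 4*(Kc j) := by exact_mod_cast hg2
    have hxB : x ∈ Bk j := by
      constructor
      · have := h2Kℓ j
        nlinarith [hx.1]
      · have := h4Kℓ j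
        nlinarith [hx.2]
    rw [hfval j x hxB]
    have hfl : ⌊(x - a)/ℓf j⌋ = (g:ℤ) := by
      rw [Int.floor_eq_iff]
      constructor
      · push_cast
        rw [le_div_iff₀ hℓj]
        linarith [hx.1]
      · push_cast
        rw [div_lt_iff₀ hℓj]
        linarith [hx.2]
    simp only [hsgndef, hfl, Int.even_coe_nat]
  -- membership in Lq
  have hnormval : ∀ x, (‖f x‖₊ : ℝ≥0∞) ^ q
      = ∑' j, (Bk j).indicator (fun _ => ENNReal.ofReal ((amp j)^q)) x := by
    intro x
    by_cases hx : ∃ j, x ∈ Bk j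
    · obtain ⟨j₀, hj₀⟩ := hx
      rw [tsum_eq_single j₀
        (fun j' hne => indicator_of_notMem (hBne j' j₀ hne x hj₀) _),
        indicator_of_mem hj₀]
      rw [← enorm_eq_nnnorm, Real.enorm_eq_ofReal_abs, hfabs j₀ x hj₀,
        ENNReal.ofReal_rpow_of_pos (hamppos j₀)]
    · push_neg at hx
      rw [hfval0 x hx]
      have : ∀ j, (Bk j).indicator (fun _ => ENNReal.ofReal ((amp j)^q)) x = 0 :=
        fun j => indicator_of_notMem (hx j) _
      simp [this, ENNReal.zero_rpow_of_pos hq]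
  have hfin : ∫⁻ x in Icc a b, (‖f x‖₊ : ℝ≥0∞) ^ q ∂volume < ∞ := by
    calc ∫⁻ x in Icc a b, (‖f x‖₊ : ℝ≥0∞) ^ q ∂volume
        = ∑' j, ∫⁻ x in Icc a b, (Bk j).indicator (fun _ => ENNReal.ofReal ((amp j)^q)) x ∂volume := by
          simp_rw [hnormval]
          exact lintegral_tsum (fun j => (measurable_const.indicator measurableSet_Ico).aemeasurable)
      _ = ∑' j, ENNReal.ofReal ((amp j)^q) * (volume.restrict (Icc a b)) (Bk j) := by
          congr 1
          funext j
          exact lintegral_indicator_const measurableSet_Ico _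
      _ ≤ ∑' j, ENNReal.ofReal ((amp j)^q) * ENNReal.ofReal (X j) := by
          apply ENNReal.tsum_le_tsum
          intro j
          apply mul_le_mul_right
          rw [Measure.restrict_apply measurableSet_Ico]
          calc volume (Bk j ∩ Icc a b) ≤ volume (Bk j) := measure_mono inter_subset_left
            _ = ENNReal.ofReal (X j) := by
                rw [hBdef]
                simp only [Real.volume_Ico]
                congr 1
                ring
      _ = ∑' (j:ℕ), ENNReal.ofReal (4*(4*K)^q) * (ENNReal.ofReal ((1/2:ℝ)^q))^j := by
          congr 1
          funext j
          rw [← ENNReal.ofReal_mul (by positivity)]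
          rw [← ENNReal.ofReal_pow (by positivity), ← ENNReal.ofReal_mul (by positivity)]
          congr 1
          have hXj := hXpos j
          have hsplit : (amp j)^q = (2 * τ j) ^ q * (4 / X j) := by
            have hW : ((4 / X j) ^ (1/q) : ℝ) ^ q = 4 / X j := by
              rw [← Real.rpow_mul (by positivity), one_div, inv_mul_cancel₀ hq.ne', Real.rpow_one]
            rw [hampdef]
            rw [Real.mul_rpow (by have := hτpos j; positivity) (Real.rpow_nonneg (by positivity) _), hW]
          rw [hsplit]
          have h2τ : (2 * τ j) = 4*K*(1/2)^j := by rw [hτdef]; ring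
          rw [h2τ]
          have hKpos : (0:ℝ) < K := lt_of_lt_of_le one_pos hK1
          have hmul : ((4*K*(1/2)^j : ℝ)) ^ q = (4*K)^q * ((1/2:ℝ)^j)^q := by
            rw [← Real.mul_rpow (by positivity) (by positivity)]
          rw [hmul]
          have hpy : ((1/2:ℝ)^j)^q = ((1/2:ℝ)^q)^j := by
            rw [← Real.rpow_natCast ((1/2:ℝ)) j, ← Real.rpow_mul (by norm_num),
              mul_comm, Real.rpow_mul (by norm_num), Real.rpow_natCast]
          rw [hpy]
          field_simp
      _ < ∞ := by
          rw [ENNReal.tsum_mul_left]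
          apply ENNReal.mul_lt_top ENNReal.ofReal_lt_top
          rw [ENNReal.tsum_geometric]
          apply ENNReal.inv_lt_top.mpr
          rw [tsub_pos_iff_lt]
          apply ENNReal.ofReal_lt_one.mpr
          apply Real.rpow_lt_one (by norm_num) (by norm_num) hq
  have hqne0 : ENNReal.ofReal q ≠ 0 := by
    simp [ENNReal.ofReal_eq_zero]; linarith
  have hqnetop : ENNReal.ofReal q ≠ ∞ := ENNReal.ofReal_ne_top
  have htoReal : (ENNReal.ofReal q).toReal = q := ENNReal.toReal_ofReal hq.le
  refine ⟨f, ⟨hfmeas.aestronglyMeasurable, ?_⟩, ?_⟩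
  · rw [eLpNorm_eq_lintegral_rpow_enorm_toReal hqne0 hqnetop, htoReal]
    exact ENNReal.rpow_lt_top_of_nonneg (by positivity) hfin.ne
  · intro i hi r hr
    set d := n i with hddef
    have hex : ∃ j, d ≤ Dm j := ⟨d, hDmj d⟩
    set j := Nat.find hex with hjdef
    have hjle : d ≤ Dm j := Nat.find_spec hex
    have hεiτ : ε i ≤ τ j := by
      rcases Nat.eq_zero_or_pos j with h0 | hpos
    
      · rw [h0, hτdef]
        simp only [pow_zero, mul_one]
        calc ε i ≤ K := hKε i
          _ ≤ 2*K := by linarith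
      · obtain ⟨j', hj'⟩ : ∃ j', j = j'+1 := ⟨j-1, by omega⟩
        have hnot : ¬ d ≤ Dm j' := Nat.find_min hex (by omega)
        have hDlt : D j' < n i := by
          have := hDDm j'
          rw [← hddef]
          omega
        have hεb := hD j' i hDlt
        rw [hj', hτdef]
        calc ε i ≤ (1/2)^j' := hεb
          _ = 2*(1/2)^(j'+1) := by ring
          _ ≤ 2*K*(1/2)^(j'+1) := by
              have : (0:ℝ) < (1/2:ℝ)^(j'+1) := by positivity
              nlinarith
    -- apply block bound
    have hsub : Ico (a + (2*(Kc j):ℝ)*ℓf j) (a + (4*(Kc j):ℝ)*ℓf j) ⊆ Icc a b := by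
      intro x hx
      apply hBsub j
      rw [hBdef]
      constructor
      · have := h2Kℓ j; have := hx.1; simp only [mem_Ico] at *; nlinarith [hx.1]
      · have := h4Kℓ j; have := hx.2; nlinarith [hx.2]
    have hd2 : 2*d ≤ Kc j := by
      simp only [hKcdef]
      omega
    have hbb := block_bound q hq d (Kc j) hd2 (ℓf j) (hℓpos j) (amp j) (hamppos j)
      hsub f (hfcell j) r hr
    rw [hdetect j] at hbb
    rw [eLpNorm_eq_lintegral_rpow_enorm_toReal hqne0 hqnetop, htoReal]
    have hstep : ENNReal.ofReal (ε i) ≤ ENNReal.ofReal (τ j) := ENNReal.ofReal_le_ofReal hεiτ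
    calc ENNReal.ofReal (ε i) ≤ ENNReal.ofReal (τ j) := hstep
      _ = (ENNReal.ofReal (τ j ^ q)) ^ (1/q) := by
          rw [← ENNReal.ofReal_rpow_of_pos (hτpos j),
            ← ENNReal.rpow_mul, mul_one_div_cancel hq.ne', ENNReal.rpow_one]
      _ ≤ (∫⁻ x in Icc a b, (‖(f - r) x‖₊ : ℝ≥0∞) ^ q ∂volume) ^ (1/q) := by
          have hgoal : (∫⁻ x in Icc a b, (‖(f - r) x‖₊ : ℝ≥0∞) ^ q ∂volume)
              = ∫⁻ x in Icc a b, (‖f x - r x‖₊ : ℝ≥0∞) ^ q ∂volume := by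
            simp only [Pi.sub_apply]
          rw [hgoal]
          exact ENNReal.rpow_le_rpow hbb (by positivity)
end

section
/- Let I = [a, b] with a < b, let (n_i)_{i≥1} and (r_i)_{i≥1} be arbitrary sequences of natural numbers, and let (ε_i)_{i≥1} be a sequence of real numbers with ε_i → 0. Then there exists a continuous function f : I → ℝ such that for every i ≥ 1, inf_{s ∈ 𝓢_{n_i, r_i}(I) ∩ C(I)} sup_{t ∈ I} |f(t) − s(t)| ≥ ε_i. -/
/-!
A spline with `r + 1` polynomial pieces of degree `≤ n` cannot alternate in sign at
`(n + 1) (r + 1) + 1` increasing points: by pigeonhole one piece contains `n + 2` consecutive ones,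
and its polynomial would then have `n + 1` roots. So it suffices to build a continuous `f` taking
the values `±A (k + 1)` with alternating signs at the points `b - (b - a) / (k + 1)`, where `A`
is an antitone null sequence with `ε i ≤ A m` for `m ≤ (n i + 1) (r i + 1) + 1`: if `|f - s| < ε i`
on `[a, b]`, then `s` has the sign of `f` at these points. Take `f = g(u) cos (π u)` with
`u = (b - a) / (b - x)` and `g` the piecewise-linear interpolation of `A`.
-/

/-- `SplineSet n r a b` is the set `𝓢_{n,r}([a,b])` of polynomial splines of degree `≤ n` with
`r` free knots on `[a, b]`: there are points `a = t_0 ≤ t_1 ≤ … ≤ t_r ≤ t_{r+1} = b` such that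
on each `[t_j, t_{j+1}]` the function coincides with a polynomial of degree `≤ n`. -/
def SplineSet (n r : ℕ) (a b : ℝ) : Set (ℝ → ℝ) :=
  { s | ∃ t : Fin (r + 2) → ℝ, Monotone t ∧ t 0 = a ∧ t (Fin.last (r + 1)) = b ∧
        ∀ j : Fin (r + 1), ∃ p : Polynomial ℝ, p.natDegree ≤ n ∧
          ∀ x ∈ Set.Icc (t j.castSucc) (t j.succ), s x = p.eval x }

open Filter Topology Set

theorem Antitone.hasSum_sub_succ {B : ℕ → ℝ} {L : ℝ} (hB : Antitone B)
    (hBL : Tendsto B atTop (𝓝 L)) : HasSum (fun m => B m - B (m + 1)) (B 0 - L) := by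
  rw [hasSum_iff_tendsto_nat_of_nonneg fun m => sub_nonneg.2 (hB m.le_succ)]
  simpa only [Finset.sum_range_sub'] using tendsto_const_nhds.sub hBL

section PiecewiseLinear

def ramp (m : ℕ) (v : ℝ) : ℝ := min 1 (max 0 (m + 1 - v))

theorem ramp_nonneg (m : ℕ) (v : ℝ) : 0 ≤ ramp m v := le_min zero_le_one (le_max_left _ _)

theorem ramp_le_one (m : ℕ) (v : ℝ) : ramp m v ≤ 1 := min_le_left _ _

theorem continuous_ramp (m : ℕ) : Continuous (ramp m) := by
  unfold ramp; fun_prop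

theorem ramp_of_le {m : ℕ} {v : ℝ} (h : v ≤ m) : ramp m v = 1 := by
  unfold ramp
  rw [max_eq_right (by linarith), min_eq_left (by linarith)]

theorem ramp_of_ge {m : ℕ} {v : ℝ} (h : m + 1 ≤ v) : ramp m v = 0 := by
  unfold ramp
  rw [max_eq_left (by linarith), min_eq_right (by linarith)]

/-- The piecewise-linear interpolation of an antitone null sequence `A` at the naturals, written as
a telescoping sum of ramps so that it converges uniformly. -/
noncomputable def piecewiseLinear (A : ℕ → ℝ) (v : ℝ) : ℝ := ∑' m, (A m - A (m + 1)) * ramp m v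

variable {A : ℕ → ℝ}

theorem abs_sub_succ_mul_ramp_le (hA : Antitone A) (m : ℕ) (v : ℝ) :
    |(A m - A (m + 1)) * ramp m v| ≤ A m - A (m + 1) := by
  have hm : 0 ≤ A m - A (m + 1) := sub_nonneg.2 (hA m.le_succ)
  rw [abs_mul, abs_of_nonneg hm, abs_of_nonneg (ramp_nonneg m v)]
  exact mul_le_of_le_one_right hm (ramp_le_one m v)

theorem piecewiseLinear_nonneg (hA : Antitone A) (v : ℝ) : 0 ≤ piecewiseLinear A v :=
  tsum_nonneg fun m => mul_nonneg (sub_nonneg.2 (hA m.le_succ)) (ramp_nonneg m v)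

theorem continuous_piecewiseLinear (hA : Antitone A) (hA0 : Tendsto A atTop (𝓝 0)) :
    Continuous (piecewiseLinear A) :=
  continuous_tsum (fun m => continuous_const.mul (continuous_ramp m))
    (hA.hasSum_sub_succ hA0).summable (abs_sub_succ_mul_ramp_le hA)

theorem hasSum_sub_succ_max (hA : Antitone A) (hA0 : Tendsto A atTop (𝓝 0)) (K : ℕ) :
    HasSum (fun m => A (max m K) - A (max (m + 1) K)) (A K) := by
  simpa using (hA.comp_monotone fun _ _ h => max_le_max h le_rfl).hasSum_sub_succ
    (hA0.comp (tendsto_atTop_mono (fun m => le_max_left m K) tendsto_id))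

theorem piecewiseLinear_natCast (hA : Antitone A) (hA0 : Tendsto A atTop (𝓝 0)) (K : ℕ) :
    piecewiseLinear A K = A K := by
  refine (tsum_congr fun m => ?_).trans (hasSum_sub_succ_max hA hA0 K).tsum_eq
  rcases lt_or_ge m K with hm | hm
  · rw [ramp_of_ge (by exact_mod_cast hm), mul_zero, max_eq_right hm.le, max_eq_right hm, sub_self]
  · rw [ramp_of_le (by exact_mod_cast hm), mul_one, max_eq_left hm,
      max_eq_left (hm.trans m.le_succ)]

theorem piecewiseLinear_le (hA : Antitone A) (hA0 : Tendsto A atTop (𝓝 0)) {K : ℕ} {v : ℝ}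
    (hv : K ≤ v) : piecewiseLinear A v ≤ A K := by
  have hsum := hasSum_sub_succ_max hA hA0 K
  refine hsum.tsum_eq ▸ Summable.tsum_le_tsum (fun m => ?_)
    ((hA.hasSum_sub_succ hA0).summable.of_norm_bounded
      fun m => abs_sub_succ_mul_ramp_le hA m v) hsum.summable
  rcases lt_or_ge m K with hm | hm
  · rw [ramp_of_ge (hv.trans' (by exact_mod_cast hm)), mul_zero]
    exact sub_nonneg.2 (hA (max_le_max m.le_succ le_rfl))
  · rw [max_eq_left hm, max_eq_left (hm.trans m.le_succ)]
    exact le_of_abs_le (abs_sub_succ_mul_ramp_le hA m v)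

theorem tendsto_piecewiseLinear_atTop (hA : Antitone A) (hA0 : Tendsto A atTop (𝓝 0)) :
    Tendsto (piecewiseLinear A) atTop (𝓝 0) :=
  tendsto_of_tendsto_of_tendsto_of_le_of_le' tendsto_const_nhds
    (hA0.comp (tendsto_nat_floor_atTop (α := ℝ)))
    (Eventually.of_forall (piecewiseLinear_nonneg hA))
    ((eventually_ge_atTop 0).mono fun _ hv => piecewiseLinear_le hA hA0 (Nat.floor_le hv))

end PiecewiseLinear

theorem exists_antitone_tendsto_zero_forall_le {ε : ℕ → ℝ} (hε : Tendsto ε atTop (𝓝 0))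
    (N : ℕ → ℕ) : ∃ A : ℕ → ℝ, Antitone A ∧ Tendsto A atTop (𝓝 0) ∧ ∀ i, ∀ m ≤ N i, ε i ≤ A m := by
  let term : ℕ → ℕ → ℝ := fun m i => if m ≤ N i then |ε i| else 0
  have hterm : ∀ m i, 0 ≤ term m i ∧ term m i ≤ |ε i| := fun m i => by
    simp only [term]; split_ifs <;> simp
  have hε' : Tendsto (fun i => |ε i|) atTop (𝓝 0) := by simpa using hε.abs
  obtain ⟨C, hC⟩ := hε'.bddAbove_range
  have hbdd : ∀ m, BddAbove (range (term m)) := fun m =>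
    ⟨C, forall_mem_range.2 fun i => (hterm m i).2.trans (hC (mem_range_self i))⟩
  refine ⟨fun m => ⨆ i, term m i, fun m m' hmm => ciSup_mono (hbdd m) fun i => ?_, ?_,
    fun i m hm => (le_abs_self _).trans ((if_pos hm).symm.le.trans (le_ciSup (hbdd m) i))⟩
  · by_cases h : m' ≤ N i
    · simp [term, h, hmm.trans h]
    · simpa [term, h] using (hterm m i).1
  refine tendsto_order.2 ⟨fun c hc => Eventually.of_forall fun m =>
    hc.trans_le ((hterm m 0).1.trans (le_ciSup (hbdd m) 0)), fun δ hδ => ?_⟩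
  obtain ⟨I, hI⟩ := eventually_atTop.1 (hε'.eventually (gt_mem_nhds (half_pos hδ)))
  filter_upwards [eventually_gt_atTop ((Finset.range I).sup N)] with m hm
  refine (ciSup_le fun i => ?_).trans_lt (half_lt_self hδ)
  rcases lt_or_ge i I with hi | hi
  · have : N i < m := (Finset.le_sup (Finset.mem_range.2 hi)).trans_lt hm
    simpa [term, this.not_ge] using (half_pos hδ).le
  · exact (hterm m i).2.trans (hI i hi).le

section PullToEndpoint

variable {a b : ℝ}

noncomputable def pullToEndpoint (a b : ℝ) (h : ℝ → ℝ) (x : ℝ) : ℝ :=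
  if x < b then h ((b - a) / (b - x)) else 0

theorem tendsto_div_sub_nhdsLT (hab : a < b) :
    Tendsto (fun x => (b - a) / (b - x)) (𝓝[<] b) atTop := by
  have hsub : Tendsto (fun x => b - x) (𝓝[<] b) (𝓝[>] 0) := by
    refine tendsto_nhdsWithin_iff.2 ⟨?_, eventually_nhdsWithin_of_forall fun x hx => ?_⟩
    · simpa using (tendsto_const_nhds (x := b)).sub (tendsto_id (x := 𝓝 b)) |>.mono_left
        nhdsWithin_le_nhds
    · exact sub_pos.2 (mem_Iio.1 hx)
  simpa only [div_eq_mul_inv, Function.comp_def] using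
    (tendsto_inv_nhdsGT_zero.comp hsub).const_mul_atTop (sub_pos.2 hab)

theorem continuousOn_pullToEndpoint (hab : a < b) {h : ℝ → ℝ} (hh : Continuous h)
    (h0 : Tendsto h atTop (𝓝 0)) : ContinuousOn (pullToEndpoint a b h) (Iic b) := by
  intro x hx
  rcases (mem_Iic.1 hx).lt_or_eq with hxb | rfl
  · refine ContinuousAt.continuousWithinAt ?_
    have hcont : ContinuousAt (fun y => h ((b - a) / (b - y))) x :=
      hh.continuousAt.comp (continuousAt_const.div (continuousAt_const.sub continuousAt_id)
        (sub_ne_zero.2 hxb.ne'))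
    refine hcont.congr (eventually_of_mem (Iio_mem_nhds hxb) fun y hy => ?_)
    simp [pullToEndpoint, mem_Iio.1 hy]
  · rw [← Iio_insert, continuousWithinAt_insert_self, ContinuousWithinAt]
    simp only [pullToEndpoint, lt_irrefl, if_false]
    exact (h0.comp (tendsto_div_sub_nhdsLT hab)).congr'
      (eventually_nhdsWithin_of_forall fun y hy => by simp [pullToEndpoint, mem_Iio.1 hy])

theorem pullToEndpoint_apply_sub_div (hab : a < b) (h : ℝ → ℝ) (k : ℕ) :
    pullToEndpoint a b h (b - (b - a) / (k + 1)) = h (k + 1) := by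
  have hba : 0 < b - a := sub_pos.2 hab
  have hk : (0 : ℝ) < k + 1 := k.cast_add_one_pos
  rw [pullToEndpoint, if_pos (sub_lt_self _ (div_pos hba hk)), sub_sub_cancel,
    div_div_cancel₀ hba.ne']

theorem sub_div_mem_Icc (hab : a ≤ b) (k : ℕ) : b - (b - a) / (k + 1) ∈ Icc a b := by
  have hba : 0 ≤ b - a := sub_nonneg.2 hab
  constructor
  · linarith [div_le_self hba (by linarith [k.cast_nonneg (α := ℝ)] : (1 : ℝ) ≤ k + 1)]
  · linarith [div_nonneg hba k.cast_add_one_pos.le]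

theorem strictMono_sub_div (hab : a < b) : StrictMono fun k : ℕ => b - (b - a) / (k + 1) :=
  strictMono_nat_of_lt_succ fun k => by
    have := sub_pos.2 hab
    gcongr
    exact k.lt_succ_self

theorem exists_continuousOn_alternating (hab : a < b) {A : ℕ → ℝ} (hA : Antitone A)
    (hA0 : Tendsto A atTop (𝓝 0)) :
    ∃ f : ℝ → ℝ, ContinuousOn f (Icc a b) ∧
      (∀ k : ℕ, |f (b - (b - a) / (k + 1))| = A (k + 1)) ∧
      ∀ k : ℕ, f (b - (b - a) / (k + 1)) * f (b - (b - a) / ((k + 1 : ℕ) + 1)) =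
        -(A (k + 1) * A (k + 1 + 1)) := by
  have hg : Continuous (piecewiseLinear A) := continuous_piecewiseLinear hA hA0
  set f := pullToEndpoint a b fun v => piecewiseLinear A v * Real.cos (v * Real.pi)
  have hf : ∀ k : ℕ, f (b - (b - a) / (k + 1)) = (-1) ^ (k + 1) * A (k + 1) := fun k => by
    rw [show f _ = _ from pullToEndpoint_apply_sub_div hab _ k, ← Nat.cast_succ,
      piecewiseLinear_natCast hA hA0, Real.cos_nat_mul_pi, mul_comm]
  refine ⟨f, (continuousOn_pullToEndpoint hab (by fun_prop)
      ((tendsto_piecewiseLinear_atTop hA hA0).zero_mul_isBoundedUnder_le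
        (isBoundedUnder_of ⟨1, fun v => Real.abs_cos_le_one _⟩))).mono Icc_subset_Iic_self,
    fun k => ?_, fun k => ?_⟩
  · rw [hf, abs_mul, abs_pow, abs_neg, abs_one, one_pow, one_mul,
      abs_of_nonneg (hA.le_of_tendsto hA0 _)]
  · have hsign : (-1 : ℝ) ^ (k + 1) * (-1) ^ (k + 1 + 1) = -1 := by
      rw [← pow_add]; exact Odd.neg_one_pow ⟨k + 1, by ring⟩
    rw [hf, hf, mul_mul_mul_comm, hsign, neg_one_mul]

end PullToEndpoint

theorem exists_mem_Icc_castSucc_succ {α : Type*} [LinearOrder α] {m : ℕ} (t : Fin (m + 2) → α)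
    {x : α} (hx : x ∈ Icc (t 0) (t (Fin.last (m + 1)))) :
    ∃ k : Fin (m + 1), x ∈ Icc (t k.castSucc) (t k.succ) := by
  by_contra! hnot
  have hle : ∀ i, t i ≤ x := Fin.induction hx.1 fun i hi => (lt_of_not_ge fun hxi =>
    hnot i ⟨hi, hxi⟩).le
  exact hnot (Fin.last m) ⟨hle _, hx.2⟩

theorem Monotone.exists_consecutive_mem_Icc {α : Type*} [LinearOrder α] {y : ℕ → α}
    (hy : Monotone y) {r n N : ℕ} (t : Fin (r + 2) → α)
    (hyt : ∀ j, y j ∈ Icc (t 0) (t (Fin.last (r + 1))))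
    (hN : (n + 1) * (r + 1) < N) :
    ∃ k : Fin (r + 1), ∃ j₀, j₀ + n + 1 < N ∧
      ∀ l ≤ n + 1, y (j₀ + l) ∈ Icc (t k.castSucc) (t k.succ) := by
  choose K hK using fun j => exists_mem_Icc_castSucc_succ t (hyt j)
  obtain ⟨k, -, hfib⟩ := Finset.exists_lt_card_fiber_of_mul_lt_card_of_maps_to
    (s := Finset.range N) (n := n + 1) (fun j _ => Finset.mem_univ (K j))
    (by simpa [mul_comm] using hN)
  set F := {j ∈ Finset.range N | K j = k}
  have hF : F.Nonempty := Finset.card_pos.1 (by omega)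
  have hmem : ∀ j ∈ F, j < N ∧ K j = k := fun j hj => by
    simpa [F] using hj
  have hspread : n + 1 < F.max' hF + 1 - F.min' hF := by
    refine hfib.trans_le ((Finset.card_le_card fun j hj => ?_).trans (Nat.card_Icc _ _).le)
    exact Finset.mem_Icc.2 ⟨F.min'_le j hj, F.le_max' j hj⟩
  obtain ⟨hj₀N, hj₀⟩ := hmem _ (F.min'_mem hF)
  obtain ⟨hj₁N, hj₁⟩ := hmem _ (F.max'_mem hF)
  refine ⟨k, F.min' hF, by omega, fun l hl => ⟨?_, ?_⟩⟩
  · exact hj₀ ▸ (hK _).1.trans (hy (Nat.le_add_right _ _))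
  · exact (hy (by omega : F.min' hF + l ≤ F.max' hF)).trans (hj₁ ▸ (hK _).2)

theorem exists_mem_Ioo_eq_zero_of_mul_neg {f : ℝ → ℝ} {x y : ℝ} (hxy : x ≤ y)
    (hf : ContinuousOn f (Icc x y)) (hneg : f x * f y < 0) : ∃ z ∈ Ioo x y, f z = 0 := by
  rcases mul_neg_iff.1 hneg with ⟨hx, hy⟩ | ⟨hx, hy⟩
  · exact intermediate_value_Ioo' hxy hf ⟨hy, hx⟩
  · exact intermediate_value_Ioo hxy hf ⟨hx, hy⟩

theorem Polynomial.le_natDegree_of_alternating {p : Polynomial ℝ} {y : ℕ → ℝ} (hy : StrictMono y)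
    {k : ℕ} (hsign : ∀ j < k, p.eval (y j) * p.eval (y (j + 1)) < 0) : k ≤ p.natDegree := by
  classical
  have hroot : ∀ j : Fin k, ∃ z ∈ Ioo (y j) (y (j + 1)), p.eval z = 0 := fun j =>
    exists_mem_Ioo_eq_zero_of_mul_neg (hy (Nat.lt_succ_self j)).le p.continuous.continuousOn
      (hsign j j.isLt)
  choose z hz hz0 using hroot
  have hzmono : StrictMono z := fun i j hij =>
    (hz i).2.trans ((hy.monotone (Nat.succ_le_of_lt hij)).trans_lt (hz j).1)
  rcases k.eq_zero_or_pos with rfl | hk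
  · exact Nat.zero_le _
  have hp : p ≠ 0 := by
    rintro rfl
    simpa using hsign 0 hk
  calc k = (Finset.univ.image z).card := by
        rw [Finset.card_image_of_injective _ hzmono.injective, Finset.card_fin]
    _ ≤ p.natDegree := Polynomial.card_le_degree_of_subset_roots fun w hw => by
        obtain ⟨j, -, rfl⟩ := Finset.mem_image.1 (Finset.mem_def.2 hw)
        exact (Polynomial.mem_roots hp).2 (hz0 j)

theorem not_alternating_of_mem_splineSet {n r : ℕ} {a b : ℝ} {s : ℝ → ℝ}
    (hs : s ∈ SplineSet n r a b) {y : ℕ → ℝ} (hy : StrictMono y) (hyI : ∀ j, y j ∈ Icc a b) :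
    ¬ ∀ j < (n + 1) * (r + 1), s (y j) * s (y (j + 1)) < 0 := by
  intro hsign
  obtain ⟨t, -, ht0, htl, hpoly⟩ := hs
  obtain ⟨k, j₀, hj₀, hpiece⟩ := hy.monotone.exists_consecutive_mem_Icc t (n := n)
    (N := (n + 1) * (r + 1) + 1) (fun j => ht0 ▸ htl ▸ hyI j) (Nat.lt_succ_self _)
  obtain ⟨p, hpn, hps⟩ := hpoly k
  have hp : n + 1 ≤ p.natDegree :=
    Polynomial.le_natDegree_of_alternating (hy.comp (strictMono_id.const_add j₀)) fun l hl => by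
      rw [Function.comp_apply, Function.comp_apply, id, id, ← hps _ (hpiece l hl.le),
        ← hps _ (hpiece (l + 1) hl), ← add_assoc]
      exact hsign _ (by omega)
  omega

theorem mul_pos_of_abs_sub_lt_abs {x x' : ℝ} (h : |x - x'| < |x|) : 0 < x * x' := by
  rcases abs_lt.1 h with ⟨h₁, h₂⟩
  rcases le_or_gt 0 x with hx | hx
  · rw [abs_of_nonneg hx] at h₁ h₂
    nlinarith
  · rw [abs_of_neg hx] at h₁ h₂
    nlinarith

theorem mul_neg_of_abs_sub_lt_abs {x x' y y' : ℝ} (hx : |x - x'| < |x|) (hy : |y - y'| < |y|)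
    (hxy : x * y < 0) : x' * y' < 0 := by
  have := mul_pos (mul_pos_of_abs_sub_lt_abs hx) (mul_pos_of_abs_sub_lt_abs hy)
  nlinarith

/-- On `I = [a, b]` with `a < b`, for any sequences `(n_i)`, `(r_i)` of
naturals and any null sequence `(ε_i)`, there is a continuous `f : I → ℝ` with
`inf_{s ∈ 𝓢_{n_i,r_i}(I) ∩ C(I)} sup_{t ∈ I} |f t - s t| ≥ ε_i` for all `i ≥ 1`. -/
theorem spline_negative_uniform (a b : ℝ) (hab : a < b) (n r : ℕ → ℕ)
    (ε : ℕ → ℝ) (hε : Filter.Tendsto ε Filter.atTop (nhds 0)) :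
    ∃ f : ℝ → ℝ, ContinuousOn f (Set.Icc a b) ∧
      ∀ i : ℕ, 1 ≤ i → ∀ s ∈ SplineSet (n i) (r i) a b, ContinuousOn s (Set.Icc a b) →
        ε i ≤ sSup ((fun t => |f t - s t|) '' Set.Icc a b) := by
  obtain ⟨A, hA, hA0, hεA⟩ :=
    exists_antitone_tendsto_zero_forall_le hε fun i => (n i + 1) * (r i + 1) + 1
  obtain ⟨f, hf, habs, hmul⟩ := exists_continuousOn_alternating hab hA hA0
  refine ⟨f, hf, fun i _ s hs hsc => ?_⟩
  by_contra! hlt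
  set y := fun k : ℕ => b - (b - a) / (k + 1)
  have hclose : ∀ k ≤ (n i + 1) * (r i + 1), |f (y k) - s (y k)| < A (k + 1) := fun k hk =>
    calc |f (y k) - s (y k)| ≤ sSup ((fun t => |f t - s t|) '' Icc a b) :=
          le_csSup (isCompact_Icc.bddAbove_image (hf.sub hsc).abs)
            (mem_image_of_mem _ (sub_div_mem_Icc hab.le k))
      _ < ε i := hlt
      _ ≤ A (k + 1) := hεA i _ (by omega)
  refine not_alternating_of_mem_splineSet hs (strictMono_sub_div hab) (sub_div_mem_Icc hab.le)
    fun k hk => ?_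
  have h₀ := hclose k (by omega)
  have h₁ := hclose (k + 1) (by omega)
  refine mul_neg_of_abs_sub_lt_abs ((habs k).symm ▸ h₀) ((habs (k + 1)).symm ▸ h₁) ?_
  rw [hmul, neg_lt_zero]
  exact mul_pos ((abs_nonneg _).trans_lt h₀) ((abs_nonneg _).trans_lt h₁)
end

section
/- Let I = [a, b] with a < b, let q ∈ (0, ∞), let (n_i)_{i≥1} and (r_i)_{i≥1} be arbitrary sequences of natural numbers, and let (ε_i)_{i≥1} be a sequence of real numbers with ε_i → 0. Then there exists a function f ∈ L^q(I) such that for every i ≥ 1, inf_{s ∈ 𝓢_{n_i, r_i}(I) ∩ C(I)} (∫_I |f(t) − s(t)|^q dt)^{1/q} ≥ ε_i. -/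
/-!
A spline `s ∈ 𝓢_{n,r}([a, b])` has few sign changes: the `r + 2` knots together with the at most
`(r + 1) n` roots of its polynomial pieces meet every interval across which `s` changes sign
(continuity plays no role). Cut `[a, b)` into the dyadic blocks
`[b - (b - a) / 2 ^ k, b - (b - a) / 2 ^ (k + 1))` and let `f` alternate between `M` and `-M` on
`4 S_k` equal cells of block `k`. If `s` has at most `S_k` sign changes, it keeps its sign on at
least `S_k` of the `2 S_k` pairs of adjacent cells, hence misses `f` by `M` on one cell of each such
pair, and `∫ |f - s| ^ q ≥ M ^ q (b - a) / 2 ^ (k + 3)`. As `ε_i → 0`, only finitely many `i` have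
`ε_i ^ q` above the level `C / 2 ^ (k + 1)`, so a finite `S_k` serves all `i` whose level is `k`;
and `f` is bounded, hence in `L^q`.
-/

open MeasureTheory

open Set Filter Topology

def SignChangesLE (s : ℝ → ℝ) (I : Set ℝ) (m : ℕ) : Prop :=
  ∃ X : Finset ℝ, X.card ≤ m ∧
    ∀ y ∈ I, ∀ z ∈ I, y ≤ z → s y * s z < 0 → ∃ x ∈ X, x ∈ Icc y z

lemma SignChangesLE.mono {s : ℝ → ℝ} {I J : Set ℝ} {m m' : ℕ} (h : SignChangesLE s I m)
    (hJI : J ⊆ I) (hm : m ≤ m') : SignChangesLE s J m' :=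
  let ⟨X, hX, hI⟩ := h
  ⟨X, hX.trans hm, fun y hy z hz => hI y (hJI hy) z (hJI hz)⟩

lemma exists_zero_of_mul_neg {f : ℝ → ℝ} {y z : ℝ} (hyz : y ≤ z) (hf : ContinuousOn f (Icc y z))
    (h : f y * f z < 0) : ∃ x ∈ Icc y z, f x = 0 := by
  rcases mul_neg_iff.1 h with ⟨hy, hz⟩ | ⟨hy, hz⟩
  · exact intermediate_value_Icc' hyz hf ⟨hz.le, hy.le⟩
  · exact intermediate_value_Icc hyz hf ⟨hy.le, hz.le⟩

lemma Fin.exists_mem_Icc_castSucc_succ {α : Type*} [LinearOrder α] {r : ℕ} (t : Fin (r + 2) → α)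
    {y : α} (h0 : t 0 ≤ y) (hlast : y ≤ t (Fin.last (r + 1))) :
    ∃ j : Fin (r + 1), y ∈ Icc (t j.castSucc) (t j.succ) := by
  by_contra! h
  simp only [mem_Icc, not_and, not_le] at h
  have hle : ∀ i, t i ≤ y := fun i => Fin.induction h0 (fun j hj => (h j hj).le) i
  exact (h (Fin.last r) (hle _)).not_ge (by rwa [Fin.succ_last])

theorem SplineSet.signChangesLE {n r : ℕ} {a b : ℝ} {s : ℝ → ℝ} (hs : s ∈ SplineSet n r a b) :
    SignChangesLE s (Icc a b) (r + 2 + (r + 1) * n) := by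
  classical
  obtain ⟨t, -, ht0, htl, hp⟩ := hs
  choose p hdeg hsp using hp
  refine ⟨Finset.univ.image t ∪ Finset.univ.biUnion fun j => (p j).roots.toFinset, ?_, ?_⟩
  · have hknots : (Finset.univ.image t).card ≤ r + 2 := by
      simpa using Finset.card_image_le (s := Finset.univ) (f := t)
    have hroots : (Finset.univ.biUnion fun j => (p j).roots.toFinset).card ≤ (r + 1) * n :=
      calc _ ≤ ∑ j : Fin (r + 1), (p j).natDegree := Finset.card_biUnion_le.trans <|
              Finset.sum_le_sum fun j _ => (Multiset.toFinset_card_le _).trans (p j).card_roots'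
        _ ≤ ∑ _j : Fin (r + 1), n := Finset.sum_le_sum fun j _ => hdeg j
        _ = (r + 1) * n := by simp
    exact (Finset.card_union_le _ _).trans (add_le_add hknots hroots)
  · rintro y ⟨hay, -⟩ z ⟨-, hzb⟩ hyz hsign
    obtain ⟨j, hyj⟩ := Fin.exists_mem_Icc_castSucc_succ t (ht0 ▸ hay) (htl ▸ hyz.trans hzb)
    rcases le_or_gt z (t j.succ) with hzj | hjz
    · have hz : z ∈ Icc (t j.castSucc) (t j.succ) := ⟨hyj.1.trans hyz, hzj⟩
      rw [hsp j y hyj, hsp j z hz] at hsign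
      obtain ⟨x, hx, hx0⟩ := exists_zero_of_mul_neg hyz (p j).continuousOn hsign
      have hp0 : p j ≠ 0 := by rintro h; simp [h] at hsign
      exact ⟨x, Finset.mem_union_right _ (Finset.mem_biUnion.2
        ⟨j, Finset.mem_univ _, by simpa [Polynomial.mem_roots hp0] using hx0⟩), hx⟩
    · exact ⟨t j.succ, Finset.mem_union_left _ (Finset.mem_image_of_mem _ (Finset.mem_univ _)),
        hyj.2, hjz.le⟩

def gridCell (c w : ℝ) (j : ℕ) : Set ℝ := Ico (c + j * w) (c + (j + 1) * w)

section gridCell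

variable {c w : ℝ}

lemma measurableSet_gridCell (j : ℕ) : MeasurableSet (gridCell c w j) := measurableSet_Ico

lemma volume_gridCell (j : ℕ) : volume (gridCell c w j) = ENNReal.ofReal w := by
  rw [gridCell, Real.volume_Ico]; ring_nf

lemma floor_div_eq_of_mem_gridCell (hw : 0 < w) {j : ℕ} {x : ℝ} (hx : x ∈ gridCell c w j) :
    ⌊(x - c) / w⌋₊ = j := by
  obtain ⟨h1, h2⟩ := hx
  rw [Nat.floor_eq_iff (div_nonneg (by nlinarith [j.cast_nonneg (α := ℝ)]) hw.le),
    le_div_iff₀ hw, div_lt_iff₀ hw]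
  constructor <;> linarith

lemma pairwise_disjoint_gridCell (hw : 0 < w) : Pairwise (Function.onFun Disjoint (gridCell c w)) :=
  fun _ _ hne => disjoint_left.2 fun _ hx hx' =>
    hne ((floor_div_eq_of_mem_gridCell hw hx).symm.trans (floor_div_eq_of_mem_gridCell hw hx'))

lemma gridCell_subset_Ico (hw : 0 ≤ w) {j N : ℕ} (hj : j < N) :
    gridCell c w j ⊆ Ico c (c + N * w) := by
  have hjN : (j + 1 : ℝ) ≤ N := by exact_mod_cast hj
  exact Ico_subset_Ico (by nlinarith [j.cast_nonneg (α := ℝ)]) (by nlinarith)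

lemma gridCell_union_gridCell (hw : 0 ≤ w) (l : ℕ) :
    gridCell c w (2 * l) ∪ gridCell c w (2 * l + 1) = gridCell c (2 * w) l := by
  simp only [gridCell, Nat.cast_add, Nat.cast_mul, Nat.cast_ofNat, Nat.cast_one]
  rw [Ico_union_Ico_eq_Ico (by nlinarith) (by nlinarith)]
  ring_nf

open scoped Classical in
lemma card_sub_le_card_filter_gridCell (hw : 0 < w) (X : Finset ℝ) (P : ℕ) :
    P - X.card ≤ ((Finset.range P).filter fun l => ∀ x ∈ X, x ∉ gridCell c w l).card := by
  have hmet : (Finset.range P).filter (fun l => ¬ ∀ x ∈ X, x ∉ gridCell c w l) ⊆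
      X.image fun x => ⌊(x - c) / w⌋₊ := by
    intro l hl
    obtain ⟨x, hxX, hx⟩ : ∃ x ∈ X, x ∈ gridCell c w l := by simpa using (Finset.mem_filter.1 hl).2
    exact Finset.mem_image.2 ⟨x, hxX, floor_div_eq_of_mem_gridCell hw hx⟩
  have := Finset.card_filter_add_card_filter_not
    (s := Finset.range P) (fun l => ∀ x ∈ X, x ∉ gridCell c w l)
  have := (Finset.card_le_card hmet).trans Finset.card_image_le
  simp only [Finset.card_range] at *
  omega

end gridCell

section LowerBound

variable {α : Type*} [MeasurableSpace α] {μ : Measure α} {M q : ℝ}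

lemma ofReal_mul_le_setLIntegral_enorm_rpow {S : Set α} (hS : MeasurableSet S) (hM : 0 ≤ M)
    (hq : 0 ≤ q) {g : α → ℝ} (hg : ∀ x ∈ S, M ≤ |g x|) :
    ENNReal.ofReal (M ^ q) * μ S ≤ ∫⁻ x in S, ‖g x‖ₑ ^ q ∂μ := by
  rw [← setLIntegral_const]
  refine setLIntegral_mono' hS fun x hx => ?_
  rw [Real.enorm_eq_ofReal_abs, ← ENNReal.ofReal_rpow_of_nonneg hM hq]
  exact ENNReal.rpow_le_rpow (ENNReal.ofReal_le_ofReal (hg x hx)) hq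

/-- Where `s` does not change sign from `I` to `J`, it misses by at least `M` the value `M` on all
of `I` or the value `-M` on all of `J`. -/
lemma ofReal_mul_min_le_setLIntegral_union {I J : Set α} (hI : MeasurableSet I)
    (hJ : MeasurableSet J) (hM : 0 ≤ M) (hq : 0 ≤ q) {f s : α → ℝ} (hfI : ∀ x ∈ I, f x = M)
    (hfJ : ∀ x ∈ J, f x = -M) (hs : ∀ y ∈ I, ∀ z ∈ J, 0 ≤ s y * s z) :
    ENNReal.ofReal (M ^ q) * min (μ I) (μ J) ≤ ∫⁻ x in I ∪ J, ‖f x - s x‖ₑ ^ q ∂μ := by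
  by_cases hfarI : ∀ y ∈ I, M ≤ |f y - s y|
  · calc _ ≤ ENNReal.ofReal (M ^ q) * μ I := by gcongr; exact min_le_left _ _
      _ ≤ ∫⁻ x in I, ‖f x - s x‖ₑ ^ q ∂μ := ofReal_mul_le_setLIntegral_enorm_rpow hI hM hq hfarI
      _ ≤ _ := lintegral_mono_set subset_union_left
  push Not at hfarI
  obtain ⟨y, hyI, hy⟩ := hfarI
  have hsy : 0 < s y := by rw [hfI y hyI] at hy; linarith [(abs_lt.1 hy).2]
  have hfarJ : ∀ z ∈ J, M ≤ |f z - s z| := by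
    intro z hzJ
    by_contra! hz
    rw [hfJ z hzJ] at hz
    have hsz : s z < 0 := by linarith [(abs_lt.1 hz).1]
    exact (hs y hyI z hzJ).not_gt (mul_neg_of_pos_of_neg hsy hsz)
  calc _ ≤ ENNReal.ofReal (M ^ q) * μ J := by gcongr; exact min_le_right _ _
    _ ≤ ∫⁻ x in J, ‖f x - s x‖ₑ ^ q ∂μ := ofReal_mul_le_setLIntegral_enorm_rpow hJ hM hq hfarJ
    _ ≤ _ := lintegral_mono_set subset_union_right

end LowerBound

lemma ofReal_mul_le_setLIntegral_gridCell_pair {c w M q : ℝ} (hw : 0 ≤ w) (hM : 0 ≤ M)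
    (hq : 0 ≤ q) {l : ℕ} {f s : ℝ → ℝ} (hf₀ : ∀ x ∈ gridCell c w (2 * l), f x = M)
    (hf₁ : ∀ x ∈ gridCell c w (2 * l + 1), f x = -M)
    (hs : ∀ y ∈ gridCell c w (2 * l), ∀ z ∈ gridCell c w (2 * l + 1), 0 ≤ s y * s z) :
    ENNReal.ofReal (M ^ q) * ENNReal.ofReal w ≤
      ∫⁻ x in gridCell c (2 * w) l, ‖f x - s x‖ₑ ^ q := by
  rw [← gridCell_union_gridCell hw]
  simpa [volume_gridCell] using ofReal_mul_min_le_setLIntegral_union (μ := volume)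
    (measurableSet_gridCell _) (measurableSet_gridCell _) hM hq hf₀ hf₁ hs

open scoped Classical in
theorem ofReal_mul_le_setLIntegral_of_alternating {c w M q : ℝ} (hw : 0 < w) (hM : 0 ≤ M)
    (hq : 0 ≤ q) {P m : ℕ} {f s : ℝ → ℝ}
    (hf : ∀ j < 2 * P, ∀ x ∈ gridCell c w j, f x = if Even j then M else -M)
    (hs : SignChangesLE s (Ico c (c + 2 * P * w)) m) :
    ENNReal.ofReal (M ^ q) * ENNReal.ofReal w * (P - m : ℕ) ≤
      ∫⁻ x in Ico c (c + 2 * P * w), ‖f x - s x‖ₑ ^ q := by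
  obtain ⟨X, hXm, hX⟩ := hs
  set F := (Finset.range P).filter fun l => ∀ x ∈ X, x ∉ gridCell c (2 * w) l
  have hblock : ∀ j < 2 * P, gridCell c w j ⊆ Ico c (c + 2 * P * w) := fun j hj => by
    simpa [mul_assoc] using gridCell_subset_Ico (c := c) hw.le hj
  have hpair : ∀ l ∈ F, ENNReal.ofReal (M ^ q) * ENNReal.ofReal w ≤
      ∫⁻ x in gridCell c (2 * w) l, ‖f x - s x‖ₑ ^ q := by
    intro l hl
    obtain ⟨hlP, hfree⟩ := Finset.mem_filter.1 hl
    have hlP : 2 * l + 1 < 2 * P := by have := Finset.mem_range.1 hlP; omega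
    refine ofReal_mul_le_setLIntegral_gridCell_pair hw.le hM hq
      (fun x hx => by simpa using hf (2 * l) (by omega) x hx)
      (fun x hx => by simpa [Nat.even_add_one] using hf (2 * l + 1) hlP x hx) fun y hy z hz => ?_
    by_contra! hyz
    have hy' := hy; have hz' := hz
    simp only [gridCell, mem_Ico, Nat.cast_add, Nat.cast_mul, Nat.cast_ofNat, Nat.cast_one]
      at hy' hz'
    obtain ⟨x, hxX, hx⟩ := hX y (hblock _ (by omega) hy) z (hblock _ hlP hz) (by linarith) hyz
    exact hfree x hxX ⟨by linarith [hx.1], by linarith [hx.2]⟩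
  have hcard : P - m ≤ F.card :=
    (Nat.sub_le_sub_left hXm P).trans (card_sub_le_card_filter_gridCell (by positivity) X P)
  calc _ ≤ ENNReal.ofReal (M ^ q) * ENNReal.ofReal w * F.card := by gcongr
    _ = ∑ l ∈ F, ENNReal.ofReal (M ^ q) * ENNReal.ofReal w := by
        rw [Finset.sum_const, nsmul_eq_mul, mul_comm]
    _ ≤ ∑ l ∈ F, ∫⁻ x in gridCell c (2 * w) l, ‖f x - s x‖ₑ ^ q := Finset.sum_le_sum hpair
    _ = ∫⁻ x in ⋃ l ∈ F, gridCell c (2 * w) l, ‖f x - s x‖ₑ ^ q :=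
        (lintegral_biUnion_finset ((pairwise_disjoint_gridCell (by positivity)).set_pairwise _)
          (fun l _ => measurableSet_gridCell l) _).symm
    _ ≤ _ := lintegral_mono_set <| iUnion₂_subset fun l hl => by
        simpa [mul_comm, mul_left_comm] using
          gridCell_subset_Ico (c := c) (w := 2 * w) (by positivity)
            (Finset.mem_range.1 (Finset.mem_filter.1 hl).1)

noncomputable def blockStart (a b : ℝ) (k : ℕ) : ℝ := b - (b - a) / 2 ^ k

noncomputable def cellWidth (a b : ℝ) (N : ℕ → ℕ) (k : ℕ) : ℝ := (b - a) / 2 ^ (k + 1) / N k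

/-- The blocks `[blockStart a b k, blockStart a b (k + 1))` of length `(b - a) / 2 ^ (k + 1)`
exhaust `[a, b)`; block `k` is cut into `N k` cells of width `cellWidth a b N k`. -/
noncomputable def alternatingFun (a b : ℝ) (N : ℕ → ℕ) (M : ℝ) : ℝ → ℝ :=
  open scoped Classical in fun x =>
    if x ∈ ⋃ k, ⋃ j, ⋃ (_ : j < N k ∧ Even j), gridCell (blockStart a b k) (cellWidth a b N k) j
    then M else -M

section alternatingFun

variable {a b : ℝ} {N : ℕ → ℕ} {M : ℝ}

lemma blockStart_zero : blockStart a b 0 = a := by simp [blockStart]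

lemma blockStart_succ (k : ℕ) :
    blockStart a b (k + 1) = blockStart a b k + (b - a) / 2 ^ (k + 1) := by
  simp only [blockStart, pow_succ]; ring

lemma monotone_blockStart (hab : a ≤ b) : Monotone (blockStart a b) :=
  monotone_nat_of_le_succ fun k => by
    rw [blockStart_succ]; linarith [show 0 ≤ (b - a) / 2 ^ (k + 1) by positivity]

lemma blockStart_le (hab : a ≤ b) (k : ℕ) : blockStart a b k ≤ b :=
  sub_le_self _ (by have := sub_nonneg.2 hab; positivity)

lemma cellWidth_pos (hab : a < b) {k : ℕ} (hN : N k ≠ 0) : 0 < cellWidth a b N k := by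
  have := sub_pos.2 hab; have := Nat.pos_of_ne_zero hN; unfold cellWidth; positivity

lemma natCast_mul_cellWidth {k : ℕ} (hN : N k ≠ 0) :
    N k * cellWidth a b N k = (b - a) / 2 ^ (k + 1) := by
  unfold cellWidth; field_simp

lemma gridCell_subset_block (hab : a < b) {k j : ℕ} (hj : j < N k) :
    gridCell (blockStart a b k) (cellWidth a b N k) j ⊆
      Ico (blockStart a b k) (blockStart a b (k + 1)) := by
  rw [blockStart_succ, ← natCast_mul_cellWidth (Nat.ne_zero_of_lt hj)]
  exact gridCell_subset_Ico (cellWidth_pos hab (Nat.ne_zero_of_lt hj)).le hj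

lemma eq_of_mem_gridCell_block (hab : a < b) {k k' j j' : ℕ} (hj : j < N k) (hj' : j' < N k')
    {x : ℝ} (hx : x ∈ gridCell (blockStart a b k) (cellWidth a b N k) j)
    (hx' : x ∈ gridCell (blockStart a b k') (cellWidth a b N k') j') : k = k' ∧ j = j' := by
  obtain rfl : k = k' := by
    by_contra hne
    exact disjoint_left.1 ((monotone_blockStart hab.le).pairwise_disjoint_on_Ico_succ hne)
      (gridCell_subset_block hab hj hx) (gridCell_subset_block hab hj' hx')
  have hw := cellWidth_pos hab (Nat.ne_zero_of_lt hj)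
  exact ⟨rfl, (floor_div_eq_of_mem_gridCell hw hx).symm.trans (floor_div_eq_of_mem_gridCell hw hx')⟩

lemma alternatingFun_eq (hab : a < b) {k j : ℕ} (hj : j < N k) {x : ℝ}
    (hx : x ∈ gridCell (blockStart a b k) (cellWidth a b N k) j) :
    alternatingFun a b N M x = if Even j then M else -M := by
  by_cases hev : Even j
  · rw [if_pos hev]
    exact if_pos (mem_iUnion₂.2 ⟨k, j, mem_iUnion.2 ⟨⟨hj, hev⟩, hx⟩⟩)
  · rw [if_neg hev]
    refine if_neg ?_
    simp only [mem_iUnion, not_exists]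
    intro k' j' ⟨hj', hev'⟩ hx'
    obtain ⟨rfl, rfl⟩ := eq_of_mem_gridCell_block hab hj' hj hx' hx
    exact hev hev'

lemma measurable_alternatingFun : Measurable (alternatingFun a b N M) :=
  Measurable.ite (.iUnion fun _ => .iUnion fun j => .iUnion fun _ => measurableSet_gridCell j)
    measurable_const measurable_const

lemma memLp_alternatingFun (p : ENNReal) :
    MemLp (alternatingFun a b N M) p (volume.restrict (Icc a b)) :=
  .of_bound measurable_alternatingFun.aestronglyMeasurable |M| <| ae_of_all _ fun x => by
    unfold alternatingFun; split_ifs <;> simp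

theorem ofReal_le_setLIntegral_alternatingFun_sub (hab : a < b) (hM : 0 ≤ M) {q : ℝ}
    (hq : 0 ≤ q) {k S : ℕ} (hN : N k = 4 * S) (hS : 0 < S) {s : ℝ → ℝ}
    (hs : SignChangesLE s (Icc a b) S) :
    ENNReal.ofReal (M ^ q * ((b - a) / 2 ^ (k + 3))) ≤
      ∫⁻ x in Icc a b, ‖alternatingFun a b N M x - s x‖ₑ ^ q := by
  have hNk : N k ≠ 0 := by omega
  have hw := cellWidth_pos hab hNk
  have hblock : Ico (blockStart a b k) (blockStart a b k + 2 * (2 * S : ℕ) * cellWidth a b N k) ⊆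
      Icc a b := by
    rw [show (2 * (2 * S : ℕ) : ℝ) = N k by rw [hN]; push_cast; ring, natCast_mul_cellWidth hNk,
      ← blockStart_succ]
    exact Ico_subset_Icc_self.trans (Icc_subset_Icc
      (blockStart_zero.ge.trans (monotone_blockStart hab.le (Nat.zero_le k)))
      (blockStart_le hab.le _))
  have hbound := ofReal_mul_le_setLIntegral_of_alternating (P := 2 * S) hw hM hq
    (fun j hj x hx => alternatingFun_eq hab (by omega) hx) (hs.mono hblock le_rfl)
  calc _ = ENNReal.ofReal (M ^ q) * ENNReal.ofReal (cellWidth a b N k) * (2 * S - S : ℕ) := by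
        rw [show 2 * S - S = S by omega, ← ENNReal.ofReal_mul (by positivity),
          ← ENNReal.ofReal_natCast, ← ENNReal.ofReal_mul (by positivity)]
        congr 1
        simp only [cellWidth, hN, pow_succ]
        field_simp
        push_cast
        ring
    _ ≤ _ := hbound
    _ ≤ _ := lintegral_mono_set hblock

end alternatingFun

lemma exists_dyadic_level {δ : ℕ → ℝ} (hδ : Tendsto δ atTop (𝓝 0)) :
    ∃ C > 0, ∃ I : ℕ → ℕ, ∀ i, 0 < δ i → ∃ k, i < I k ∧ δ i ≤ C / 2 ^ k := by
  obtain ⟨C, hC⟩ := hδ.bddAbove_range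
  have hC₁ : 0 < max C 1 := lt_max_of_lt_right one_pos
  choose I hI using fun k : ℕ =>
    eventually_atTop.1 (hδ.eventually (gt_mem_nhds (by positivity : 0 < max C 1 / 2 ^ (k + 1))))
  refine ⟨max C 1, hC₁, I, fun i hi => ?_⟩
  obtain ⟨k, hk, hk'⟩ := exists_nat_pow_near
    ((one_le_div hi).2 ((hC ⟨i, rfl⟩).trans (le_max_left _ _))) one_lt_two
  rw [le_div_iff₀ hi] at hk
  rw [div_lt_iff₀ hi] at hk'
  refine ⟨k, not_le.1 fun hik => (hI k i hik).not_ge ?_, ?_⟩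
  · rw [div_le_iff₀ (by positivity)]; linarith
  · rw [le_div_iff₀ (by positivity)]; linarith

lemma ofReal_le_eLpNorm_of_ofReal_rpow_le {α : Type*} [MeasurableSpace α] {μ : Measure α}
    {g : α → ℝ} {e q : ℝ} (he : 0 ≤ e) (hq : 0 < q)
    (h : ENNReal.ofReal (e ^ q) ≤ ∫⁻ x, ‖g x‖ₑ ^ q ∂μ) :
    ENNReal.ofReal e ≤ eLpNorm g (ENNReal.ofReal q) μ := by
  rwa [eLpNorm_eq_lintegral_rpow_enorm_toReal (by simpa using hq) ENNReal.ofReal_ne_top,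
    ENNReal.toReal_ofReal hq.le, one_div, ENNReal.le_rpow_inv_iff hq,
    ENNReal.ofReal_rpow_of_nonneg he hq.le]

/-- On `I = [a, b]` with `a < b`, for `q ∈ (0, ∞)`, any sequences `(n_i)`,
`(r_i)` of naturals and any null sequence `(ε_i)`, there is `f ∈ L^q(I)` with
`inf_{s ∈ 𝓢_{n_i,r_i}(I) ∩ C(I)} ‖f - s‖_{L^q(I)} ≥ ε_i` for all `i ≥ 1`. -/
theorem spline_negative_Lq (a b : ℝ) (hab : a < b) (q : ℝ) (hq : 0 < q) (n r : ℕ → ℕ)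
    (ε : ℕ → ℝ) (hε : Filter.Tendsto ε Filter.atTop (nhds 0)) :
    ∃ f : ℝ → ℝ, MemLp f (ENNReal.ofReal q) (volume.restrict (Set.Icc a b)) ∧
      ∀ i : ℕ, 1 ≤ i → ∀ s ∈ SplineSet (n i) (r i) a b, ContinuousOn s (Set.Icc a b) →
        ENNReal.ofReal (ε i)
          ≤ eLpNorm (f - s) (ENNReal.ofReal q) (volume.restrict (Set.Icc a b)) := by
  have hδ : Tendsto (fun i => max (ε i) 0 ^ q) atTop (𝓝 0) := by
    simpa [Real.zero_rpow hq.ne'] using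
      (hε.max (tendsto_const_nhds (x := (0 : ℝ)))).rpow_const (Or.inr hq.le)
  obtain ⟨C, hC, I, hI⟩ := exists_dyadic_level hδ
  set S : ℕ → ℕ := fun k => ∑ i ∈ Finset.range (I k), (r i + 2 + (r i + 1) * n i)
  set M := (8 * C / (b - a)) ^ q⁻¹
  have hM : M ^ q = 8 * C / (b - a) :=
    Real.rpow_inv_rpow (div_pos (by positivity) (sub_pos.2 hab)).le hq.ne'
  refine ⟨alternatingFun a b (fun k => 4 * S k) M, memLp_alternatingFun _, fun i _ s hs _ => ?_⟩
  rcases le_or_gt (ε i) 0 with hεi | hεi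
  · simp [ENNReal.ofReal_of_nonpos hεi]
  obtain ⟨k, hik, hδk⟩ := hI i (by simpa [hεi.le] using Real.rpow_pos_of_pos hεi q)
  have hSk : r i + 2 + (r i + 1) * n i ≤ S k :=
    Finset.single_le_sum (f := fun i => r i + 2 + (r i + 1) * n i) (fun _ _ => Nat.zero_le _)
      (Finset.mem_range.2 hik)
  refine ofReal_le_eLpNorm_of_ofReal_rpow_le hεi.le hq ?_
  calc ENNReal.ofReal (ε i ^ q) ≤ ENNReal.ofReal (M ^ q * ((b - a) / 2 ^ (k + 3))) := by
        refine ENNReal.ofReal_le_ofReal ?_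
        have hba : b - a ≠ 0 := (sub_pos.2 hab).ne'
        rw [hM, show 8 * C / (b - a) * ((b - a) / 2 ^ (k + 3)) = C / 2 ^ k by
          field_simp; ring]
        simpa [hεi.le] using hδk
    _ ≤ _ := ofReal_le_setLIntegral_alternatingFun_sub (N := fun k => 4 * S k) (S := S k) hab
        (by positivity) hq.le rfl (by omega)
        ((SplineSet.signChangesLE hs).mono subset_rfl hSk)
end
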